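/- arXiv:1204.2639 — 3 statements merged into one kernel-verified Lean document; each statement's English description precedes it below -/
import Mathlib

section
/- Let g₀ : [0,∞) → ℝ be smooth with g₀(0) = 0 and |g₀^{(k)}(τ)| ≤ C_k e^{-ντ} for all k ≥ 0 and some ν > 0. Define G₀(ξ,t) = ∫₀^∞ e^{-iξτ} g₀(τ+t) dτ for t ≥ 0, ξ ∈ ℝ. Then for all k, m ≥ 0 there exist constants C_{km} such that |∂^{m+k} G₀ / ∂t^m ∂ξ^k (ξ,t)| ≤ C_{km} e^{-νt} (1+|ξ|)^{-k-1}. -/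
open MeasureTheory Set

/-- One-sided Fourier transform in `τ` of `g₀(τ + t)`. -/
noncomputable def G0 (g₀ : ℝ → ℝ) (ξ t : ℝ) : ℂ :=
  ∫ τ in Ioi (0:ℝ), Complex.exp (-Complex.I * ξ * τ) * (g₀ (τ + t) : ℂ)

noncomputable def Kint (g₀ : ℝ → ℝ) (j m : ℕ) (ξ t : ℝ) : ℂ :=
  ∫ τ in Ioi (0:ℝ), (τ:ℂ)^j * Complex.exp (-Complex.I * ξ * τ) * ((iteratedDeriv m g₀ (τ + t) : ℝ) : ℂ)

section Aux

variable {g₀ : ℝ → ℝ} {ν : ℝ}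

lemma hasDerivAt_iter (hsmooth : ContDiff ℝ (⊤ : ℕ∞) g₀) (m : ℕ) (y : ℝ) :
    HasDerivAt (iteratedDeriv m g₀) (iteratedDeriv (m+1) g₀ y) y := by
  have hS : ContDiff ℝ (⊤:ℕ∞) g₀ := hsmooth.of_le (by simp)
  have hd : Differentiable ℝ (iteratedDeriv m g₀) :=
    (contDiff_iff_iteratedDeriv.mp hS).2 m (by simp)
  rw [iteratedDeriv_succ]
  exact (hd y).hasDerivAt

lemma extDecay (hν : 0 < ν) (hsmooth : ContDiff ℝ (⊤ : ℕ∞) g₀)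
    (hdecay : ∀ k : ℕ, ∃ C : ℝ, ∀ τ : ℝ, 0 ≤ τ →
      |iteratedDeriv k g₀ τ| ≤ C * Real.exp (-ν * τ)) (m : ℕ) :
    ∃ C : ℝ, 0 ≤ C ∧ ∀ s : ℝ, -1 ≤ s → |iteratedDeriv m g₀ s| ≤ C * Real.exp (-ν * s) := by
  obtain ⟨C₀, hC₀⟩ := hdecay m
  have hcont : Continuous (iteratedDeriv m g₀) := hsmooth.continuous_iteratedDeriv m (by exact_mod_cast le_top)
  obtain ⟨M, hM⟩ : ∃ M, ∀ s ∈ Icc (-1:ℝ) 0, ‖iteratedDeriv m g₀ s‖ ≤ M :=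
    isCompact_Icc.exists_bound_of_continuousOn hcont.continuousOn
  refine ⟨max (max C₀ M) 0, le_max_right _ _, fun s hs => ?_⟩
  rcases le_or_gt 0 s with h0 | h0
  · refine (hC₀ s h0).trans ?_
    have := Real.exp_pos (-ν * s)
    nlinarith [le_max_left C₀ M, le_max_left (max C₀ M) (0:ℝ)]
  · have hs' : s ∈ Icc (-1:ℝ) 0 := ⟨hs, h0.le⟩
    have h1 : |iteratedDeriv m g₀ s| ≤ M := hM s hs'
    have h2 : (1:ℝ) ≤ Real.exp (-ν * s) := by
      rw [show (1:ℝ) = Real.exp 0 by simp]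
      apply Real.exp_le_exp.mpr
      nlinarith
    have hM0 : 0 ≤ M := (abs_nonneg _).trans h1
    have : M ≤ max (max C₀ M) 0 := le_trans (le_max_right C₀ M) (le_max_left _ _)
    nlinarith

lemma polyExpInt (hν : 0 < ν) (j : ℕ) :
    IntegrableOn (fun τ : ℝ => τ^j * Real.exp (-ν*τ)) (Ioi 0) := by
  have := integrableOn_rpow_mul_exp_neg_mul_rpow (p := 1) (s := (j:ℝ)) (b := ν)
    (lt_of_lt_of_le neg_one_lt_zero (Nat.cast_nonneg j)) one_pos hν
  refine this.congr_fun (fun x hx => ?_) measurableSet_Ioi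
  simp only [Real.rpow_natCast, Real.rpow_one]

lemma norm_integrand (j m : ℕ) (ξ t τ : ℝ) (hτ : 0 ≤ τ) :
    ‖(τ:ℂ)^j * Complex.exp (-Complex.I * ξ * τ) * ((iteratedDeriv m g₀ (τ + t) : ℝ) : ℂ)‖
      = τ^j * |iteratedDeriv m g₀ (τ + t)| := by
  simp [norm_mul, map_pow, Complex.norm_real, abs_of_nonneg hτ,
    Complex.norm_exp, Complex.mul_re]

lemma cont_integrand (hsmooth : ContDiff ℝ (⊤ : ℕ∞) g₀) (j m : ℕ) (ξ t : ℝ) :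
    Continuous fun τ : ℝ =>
      (τ:ℂ)^j * Complex.exp (-Complex.I * ξ * τ) * ((iteratedDeriv m g₀ (τ + t) : ℝ) : ℂ) := by
  have h1 : Continuous (iteratedDeriv m g₀) := hsmooth.continuous_iteratedDeriv m (by exact_mod_cast le_top)
  refine ((Complex.continuous_ofReal.pow j).mul ?_).mul
    (Complex.continuous_ofReal.comp (h1.comp (continuous_id.add continuous_const)))
  exact Complex.continuous_exp.comp (continuous_const.mul Complex.continuous_ofReal)

lemma integrable_integrand (hν : 0 < ν) (hsmooth : ContDiff ℝ (⊤ : ℕ∞) g₀)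
    (hdecay : ∀ k : ℕ, ∃ C : ℝ, ∀ τ : ℝ, 0 ≤ τ →
      |iteratedDeriv k g₀ τ| ≤ C * Real.exp (-ν * τ)) (j m : ℕ) (ξ t : ℝ) (ht : -1 ≤ t) :
    IntegrableOn (fun τ : ℝ =>
      (τ:ℂ)^j * Complex.exp (-Complex.I * ξ * τ) * ((iteratedDeriv m g₀ (τ + t) : ℝ) : ℂ)) (Ioi 0) := by
  obtain ⟨C, hC0, hC⟩ := extDecay hν hsmooth hdecay m
  refine Integrable.mono' (((polyExpInt hν j).const_mul (C * Real.exp (-ν*t))))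
    ((cont_integrand hsmooth j m ξ t).aestronglyMeasurable.restrict) ?_
  filter_upwards [ae_restrict_mem measurableSet_Ioi] with τ hτ
  rw [norm_integrand j m ξ t τ (le_of_lt hτ)]
  have h1 : |iteratedDeriv m g₀ (τ + t)| ≤ C * Real.exp (-ν * (τ + t)) :=
    hC _ (by simp only [mem_Ioi] at hτ; linarith)
  have h2 : Real.exp (-ν * (τ + t)) = Real.exp (-ν*t) * Real.exp (-ν*τ) := by
    rw [← Real.exp_add]; ring_nf
  have hτ0 : (0:ℝ) ≤ τ := le_of_lt hτ
  calc τ^j * |iteratedDeriv m g₀ (τ + t)| ≤ τ^j * (C * Real.exp (-ν * (τ + t))) := by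
        exact mul_le_mul_of_nonneg_left h1 (pow_nonneg hτ0 j)
    _ = C * Real.exp (-ν*t) * (τ^j * Real.exp (-ν*τ)) := by rw [h2]; ring

lemma norm_Kint_le (hν : 0 < ν) (hsmooth : ContDiff ℝ (⊤ : ℕ∞) g₀)
    (hdecay : ∀ k : ℕ, ∃ C : ℝ, ∀ τ : ℝ, 0 ≤ τ →
      |iteratedDeriv k g₀ τ| ≤ C * Real.exp (-ν * τ)) (j m : ℕ) :
    ∃ C : ℝ, 0 ≤ C ∧ ∀ ξ t : ℝ, 0 ≤ t → ‖Kint g₀ j m ξ t‖ ≤ C * Real.exp (-ν * t) := by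
  obtain ⟨C, hC0, hC⟩ := extDecay hν hsmooth hdecay m
  set A : ℝ := ∫ τ in Ioi (0:ℝ), τ^j * Real.exp (-ν*τ) with hA
  have hA0 : 0 ≤ A := setIntegral_nonneg measurableSet_Ioi (fun x hx => mul_nonneg (pow_nonneg (le_of_lt hx) j) (Real.exp_pos _).le)
  refine ⟨C * A, by positivity, fun ξ t ht => ?_⟩
  have hbd : ‖Kint g₀ j m ξ t‖ ≤ ∫ τ in Ioi (0:ℝ),
      (C * Real.exp (-ν*t)) * (τ^j * Real.exp (-ν*τ)) := by
    unfold Kint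
    refine norm_integral_le_of_norm_le ((polyExpInt hν j).const_mul _) ?_
    filter_upwards [ae_restrict_mem measurableSet_Ioi] with τ hτ
    rw [norm_integrand j m ξ t τ (le_of_lt hτ)]
    have h1 : |iteratedDeriv m g₀ (τ + t)| ≤ C * Real.exp (-ν * (τ + t)) :=
      hC _ (by simp only [mem_Ioi] at hτ; linarith)
    have h2 : Real.exp (-ν * (τ + t)) = Real.exp (-ν*t) * Real.exp (-ν*τ) := by
      rw [← Real.exp_add]; ring_nf
    have hτ0 : (0:ℝ) ≤ τ := le_of_lt hτ
    calc τ^j * |iteratedDeriv m g₀ (τ + t)| ≤ τ^j * (C * Real.exp (-ν * (τ + t))) :=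
          mul_le_mul_of_nonneg_left h1 (pow_nonneg hτ0 j)
      _ = C * Real.exp (-ν*t) * (τ^j * Real.exp (-ν*τ)) := by rw [h2]; ring
  refine hbd.trans ?_
  rw [integral_const_mul]
  rw [← hA]
  nlinarith [Real.exp_pos (-ν*t)]

lemma hasDerivAt_t (hν : 0 < ν) (hsmooth : ContDiff ℝ (⊤ : ℕ∞) g₀)
    (hdecay : ∀ k : ℕ, ∃ C : ℝ, ∀ τ : ℝ, 0 ≤ τ →
      |iteratedDeriv k g₀ τ| ≤ C * Real.exp (-ν * τ)) (j m : ℕ) (ξ : ℝ) {t : ℝ} (ht : -1 < t) :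
    HasDerivAt (fun t' => Kint g₀ j m ξ t') (Kint g₀ j (m+1) ξ t) t := by
  obtain ⟨C, hC0, hC⟩ := extDecay hν hsmooth hdecay (m+1)
  set ε : ℝ := (t+1)/2 with hε
  have hε0 : 0 < ε := by rw [hε]; linarith
  have key := hasDerivAt_integral_of_dominated_loc_of_deriv_le (μ := volume.restrict (Ioi 0))
    (F := fun x τ => (τ:ℂ)^j * Complex.exp (-Complex.I * ξ * τ) *
      ((iteratedDeriv m g₀ (τ + x) : ℝ) : ℂ))
    (F' := fun x τ => (τ:ℂ)^j * Complex.exp (-Complex.I * ξ * τ) *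
      ((iteratedDeriv (m+1) g₀ (τ + x) : ℝ) : ℂ))
    (x₀ := t)
    (bound := fun τ => C * Real.exp (-ν*(t-ε)) * (τ^j * Real.exp (-ν*τ))) (Metric.ball_mem_nhds t hε0)
    (Filter.Eventually.of_forall fun x =>
      (cont_integrand hsmooth j m ξ x).aestronglyMeasurable.restrict)
    (integrable_integrand hν hsmooth hdecay j m ξ t (by linarith))
    ((cont_integrand hsmooth j (m+1) ξ t).aestronglyMeasurable.restrict)
    ?_ (((polyExpInt hν j).const_mul _)) ?_
  · exact key.2
  · -- bound
    filter_upwards [ae_restrict_mem measurableSet_Ioi] with τ hτ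
    intro x hx
    have hτ0 : (0:ℝ) < τ := hτ
    have hx1 : t - ε ≤ x := by
      have := abs_sub_lt_iff.mp (mem_ball_iff_norm.mp hx)
      linarith [this.1, this.2]
    rw [norm_integrand j (m+1) ξ x τ hτ0.le]
    have h1 : |iteratedDeriv (m+1) g₀ (τ + x)| ≤ C * Real.exp (-ν * (τ + x)) :=
      hC _ (by linarith)
    have h2 : Real.exp (-ν * (τ + x)) ≤ Real.exp (-ν*τ) * Real.exp (-ν*(t-ε)) := by
      rw [← Real.exp_add]
      apply Real.exp_le_exp.mpr
      nlinarith
    calc τ^j * |iteratedDeriv (m+1) g₀ (τ + x)|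
        ≤ τ^j * (C * (Real.exp (-ν*τ) * Real.exp (-ν*(t-ε)))) := by
          refine mul_le_mul_of_nonneg_left (h1.trans ?_) (pow_nonneg hτ0.le j)
          exact mul_le_mul_of_nonneg_left h2 hC0
      _ = C * Real.exp (-ν*(t-ε)) * (τ^j * Real.exp (-ν*τ)) := by ring
  · -- differentiability
    filter_upwards [ae_restrict_mem measurableSet_Ioi] with τ hτ
    intro x hx
    have hg : HasDerivAt (fun x : ℝ => iteratedDeriv m g₀ (τ + x))
        (iteratedDeriv (m+1) g₀ (τ + x)) x := by
      have h2 : HasDerivAt (fun x : ℝ => τ + x) 1 x := (hasDerivAt_id x).const_add τ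
      have := (hasDerivAt_iter hsmooth m (τ + x)).comp x h2
      simpa [Function.comp_def] using this
    exact hg.ofReal_comp.const_mul ((τ:ℂ)^j * Complex.exp (-Complex.I * ξ * τ))

lemma t_iterated (hν : 0 < ν) (hsmooth : ContDiff ℝ (⊤ : ℕ∞) g₀)
    (hdecay : ∀ k : ℕ, ∃ C : ℝ, ∀ τ : ℝ, 0 ≤ τ →
      |iteratedDeriv k g₀ τ| ≤ C * Real.exp (-ν * τ)) (m : ℕ) (ξ : ℝ) :
    ∀ t : ℝ, -1 < t → iteratedDeriv m (fun t' => G0 g₀ ξ t') t = Kint g₀ 0 m ξ t := by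
  induction m with
  | zero => intro t ht; simp [G0, Kint]
  | succ m ih =>
    intro t ht
    rw [iteratedDeriv_succ]
    have heq : (fun t' => iteratedDeriv m (fun t'' => G0 g₀ ξ t'') t')
        =ᶠ[nhds t] (fun t' => Kint g₀ 0 m ξ t') := by
      filter_upwards [isOpen_Ioi.mem_nhds ht] with s hs using ih s hs
    rw [heq.deriv_eq]
    exact (hasDerivAt_t hν hsmooth hdecay 0 m ξ ht).deriv

lemma hasDerivAt_xi (hν : 0 < ν) (hsmooth : ContDiff ℝ (⊤ : ℕ∞) g₀)
    (hdecay : ∀ k : ℕ, ∃ C : ℝ, ∀ τ : ℝ, 0 ≤ τ →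
      |iteratedDeriv k g₀ τ| ≤ C * Real.exp (-ν * τ)) (j m : ℕ) (ξ : ℝ) {t : ℝ} (ht : -1 ≤ t) :
    HasDerivAt (fun ξ' => Kint g₀ j m ξ' t) (-Complex.I * Kint g₀ (j+1) m ξ t) ξ := by
  obtain ⟨C, hC0, hC⟩ := extDecay hν hsmooth hdecay m
  have key := hasDerivAt_integral_of_dominated_loc_of_deriv_le (μ := volume.restrict (Ioi 0))
    (F := fun (x : ℝ) (τ : ℝ) => (τ:ℂ)^j * Complex.exp (-Complex.I * (x:ℂ) * (τ:ℂ)) *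
      ((iteratedDeriv m g₀ (τ + t) : ℝ) : ℂ))
    (F' := fun (x : ℝ) (τ : ℝ) => -Complex.I * ((τ:ℂ)^(j+1) * Complex.exp (-Complex.I * (x:ℂ) * (τ:ℂ)) *
      ((iteratedDeriv m g₀ (τ + t) : ℝ) : ℂ)))
    (x₀ := ξ)
    (bound := fun τ => C * Real.exp (-ν*t) * (τ^(j+1) * Real.exp (-ν*τ))) (Metric.ball_mem_nhds ξ one_pos)
    (Filter.Eventually.of_forall fun x =>
      (cont_integrand hsmooth j m x t).aestronglyMeasurable.restrict)
    (integrable_integrand hν hsmooth hdecay j m ξ t ht)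
    ((continuous_const.mul (cont_integrand hsmooth (j+1) m ξ t)).aestronglyMeasurable.restrict)
    ?_ (((polyExpInt hν (j+1)).const_mul _)) ?_
  · have h2 : (∫ τ in Ioi (0:ℝ), -Complex.I * ((τ:ℂ)^(j+1) *
        Complex.exp (-Complex.I * ξ * τ) * ((iteratedDeriv m g₀ (τ + t) : ℝ) : ℂ)))
        = -Complex.I * Kint g₀ (j+1) m ξ t := by
      unfold Kint
      simp only [← smul_eq_mul (a := -Complex.I), integral_smul]
    rw [← h2]
    exact key.2
  · filter_upwards [ae_restrict_mem measurableSet_Ioi] with τ hτ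
    intro x hx
    have hτ0 : (0:ℝ) < τ := hτ
    rw [norm_mul]
    have hI : ‖-Complex.I‖ = 1 := by simp
    rw [hI, one_mul, norm_integrand (j+1) m x t τ hτ0.le]
    have h1 : |iteratedDeriv m g₀ (τ + t)| ≤ C * Real.exp (-ν * (τ + t)) :=
      hC _ (by linarith)
    have h2 : Real.exp (-ν * (τ + t)) = Real.exp (-ν*t) * Real.exp (-ν*τ) := by
      rw [← Real.exp_add]; ring_nf
    calc τ^(j+1) * |iteratedDeriv m g₀ (τ + t)|
        ≤ τ^(j+1) * (C * Real.exp (-ν * (τ + t))) :=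
          mul_le_mul_of_nonneg_left h1 (pow_nonneg hτ0.le _)
      _ = C * Real.exp (-ν*t) * (τ^(j+1) * Real.exp (-ν*τ)) := by rw [h2]; ring
  · filter_upwards [ae_restrict_mem measurableSet_Ioi] with τ hτ
    intro x hx
    have he : HasDerivAt (fun x : ℝ => Complex.exp (-Complex.I * x * τ))
        ((-Complex.I * τ) * Complex.exp (-Complex.I * x * τ)) x := by
      have hfun : (fun x : ℝ => Complex.exp (-Complex.I * x * τ))
          = fun x : ℝ => Complex.exp ((x:ℂ) * (-Complex.I * τ)) := by
        funext y; ring_nf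
      have h0 : HasDerivAt (fun x : ℝ => ((x:ℝ):ℂ)) 1 x := by
        simpa using (hasDerivAt_id x).ofReal_comp
      have h1 := (h0.mul_const (-Complex.I * (τ:ℂ))).cexp
      rw [hfun]
      convert h1 using 1
      rw [show (x:ℂ) * (-Complex.I * τ) = -Complex.I * x * τ by ring]; ring
    have hD := (he.const_mul ((τ:ℂ)^j)).mul_const ((iteratedDeriv m g₀ (τ + t) : ℝ) : ℂ)
    refine hD.congr_deriv ?_
    ring
  
lemma xi_iterated (hν : 0 < ν) (hsmooth : ContDiff ℝ (⊤ : ℕ∞) g₀)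
    (hdecay : ∀ k : ℕ, ∃ C : ℝ, ∀ τ : ℝ, 0 ≤ τ →
      |iteratedDeriv k g₀ τ| ≤ C * Real.exp (-ν * τ)) (k m : ℕ) {t : ℝ} (ht : -1 ≤ t) :
    ∀ ξ : ℝ, iteratedDeriv k (fun ξ' => Kint g₀ 0 m ξ' t) ξ
      = (-Complex.I)^k * Kint g₀ k m ξ t := by
  induction k with
  | zero => intro ξ; simp
  | succ k ih =>
    intro ξ
    rw [iteratedDeriv_succ]
    have hfe : iteratedDeriv k (fun ξ' => Kint g₀ 0 m ξ' t)
        = fun ξ' => (-Complex.I)^k * Kint g₀ k m ξ' t := funext ih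
    rw [hfe]
    have hD := (hasDerivAt_xi hν hsmooth hdecay k m ξ ht).const_mul ((-Complex.I)^k)
    rw [hD.deriv, pow_succ]
    ring

lemma tendsto_integrand_zero (hν : 0 < ν) (hsmooth : ContDiff ℝ (⊤ : ℕ∞) g₀)
    (hdecay : ∀ k : ℕ, ∃ C : ℝ, ∀ τ : ℝ, 0 ≤ τ →
      |iteratedDeriv k g₀ τ| ≤ C * Real.exp (-ν * τ)) (j m : ℕ) (ξ : ℝ) {t : ℝ} (ht : -1 ≤ t) :
    Filter.Tendsto (fun τ : ℝ => (τ:ℂ)^j * Complex.exp (-Complex.I * ξ * τ) *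
      ((iteratedDeriv m g₀ (τ + t) : ℝ) : ℂ)) Filter.atTop (nhds 0) := by
  obtain ⟨C, hC0, hC⟩ := extDecay hν hsmooth hdecay m
  have hg : Filter.Tendsto (fun x : ℝ => x^j * Real.exp (-ν*x)) Filter.atTop (nhds 0) := by
    have h1 := (Real.tendsto_pow_mul_exp_neg_atTop_nhds_zero j).comp
      (Filter.tendsto_id.const_mul_atTop hν)
    have h2 := h1.const_mul ((ν⁻¹)^j)
    rw [mul_zero] at h2
    refine h2.congr (fun x => ?_)
    simp only [Function.comp, id]
    rw [neg_mul]; rw [mul_pow]; field_simp; rw [← mul_pow, one_div, inv_mul_cancel₀ hν.ne', one_pow, one_mul]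
  have hg2 : Filter.Tendsto (fun x : ℝ => (C * Real.exp (-ν*t)) * (x^j * Real.exp (-ν*x)))
      Filter.atTop (nhds 0) := by
    have := hg.const_mul (C * Real.exp (-ν*t))
    rwa [mul_zero] at this
  refine squeeze_zero_norm' ?_ hg2
  filter_upwards [Filter.eventually_ge_atTop (0:ℝ)] with τ hτ
  rw [norm_integrand j m ξ t τ hτ]
  have h1 : |iteratedDeriv m g₀ (τ + t)| ≤ C * Real.exp (-ν * (τ + t)) := hC _ (by linarith)
  have h2 : Real.exp (-ν * (τ + t)) = Real.exp (-ν*t) * Real.exp (-ν*τ) := by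
    rw [← Real.exp_add]; ring_nf
  calc τ^j * |iteratedDeriv m g₀ (τ + t)| ≤ τ^j * (C * Real.exp (-ν * (τ + t))) :=
        mul_le_mul_of_nonneg_left h1 (pow_nonneg hτ j)
    _ = C * Real.exp (-ν*t) * (τ^j * Real.exp (-ν*τ)) := by rw [h2]; ring

set_option maxHeartbeats 1000000 in
lemma ibp (hν : 0 < ν) (hsmooth : ContDiff ℝ (⊤ : ℕ∞) g₀)
    (hdecay : ∀ k : ℕ, ∃ C : ℝ, ∀ τ : ℝ, 0 ≤ τ →
      |iteratedDeriv k g₀ τ| ≤ C * Real.exp (-ν * τ)) (j m : ℕ) (ξ : ℝ) {t : ℝ} (ht : 0 ≤ t) :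
    Complex.I * ξ * Kint g₀ j m ξ t
      = (0:ℂ)^j * ((iteratedDeriv m g₀ t : ℝ) : ℂ) + (j:ℂ) * Kint g₀ (j-1) m ξ t
        + Kint g₀ j (m+1) ξ t := by
  have ht1 : (-1:ℝ) ≤ t := by linarith
  set f : ℝ → ℂ := fun τ => (τ:ℂ)^j * Complex.exp (-Complex.I * ξ * τ) *
    ((iteratedDeriv m g₀ (τ + t) : ℝ) : ℂ) with hf
  set f' : ℝ → ℂ := fun τ =>
    (j:ℂ) • ((τ:ℂ)^(j-1) * Complex.exp (-Complex.I * ξ * τ) *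
      ((iteratedDeriv m g₀ (τ + t) : ℝ) : ℂ))
    + (-Complex.I * ξ) • ((τ:ℂ)^j * Complex.exp (-Complex.I * ξ * τ) *
      ((iteratedDeriv m g₀ (τ + t) : ℝ) : ℂ))
    + ((τ:ℂ)^j * Complex.exp (-Complex.I * ξ * τ) *
      ((iteratedDeriv (m+1) g₀ (τ + t) : ℝ) : ℂ)) with hf'
  have hderiv : ∀ τ : ℝ, τ ∈ Ioi (0:ℝ) → HasDerivAt f (f' τ) τ := by
    intro τ _
    have h0 : HasDerivAt (fun x : ℝ => ((x:ℝ):ℂ)) 1 τ := by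
      simpa using (hasDerivAt_id τ).ofReal_comp
    have hp : HasDerivAt (fun x : ℝ => ((x:ℝ):ℂ)^j) ((j:ℂ) * (τ:ℂ)^(j-1)) τ :=
      (hasDerivAt_pow j ((τ:ℝ):ℂ)).comp_ofReal
    have he : HasDerivAt (fun x : ℝ => Complex.exp (-Complex.I * ξ * x))
        ((-Complex.I * ξ) * Complex.exp (-Complex.I * ξ * τ)) τ := by
      have hfun : (fun x : ℝ => Complex.exp (-Complex.I * ξ * x))
          = fun x : ℝ => Complex.exp ((x:ℂ) * (-Complex.I * ξ)) := by
        funext y; ring_nf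
      have h1 := (h0.mul_const (-Complex.I * (ξ:ℂ))).cexp
      rw [hfun]
      convert h1 using 1
      ring_nf
    have hh : HasDerivAt (fun x : ℝ => ((iteratedDeriv m g₀ (x + t) : ℝ) : ℂ))
        ((iteratedDeriv (m+1) g₀ (τ + t) : ℝ) : ℂ) τ := by
      have h2 : HasDerivAt (fun x : ℝ => x + t) 1 τ := (hasDerivAt_id τ).add_const t
      have h3 : HasDerivAt (fun x : ℝ => iteratedDeriv m g₀ (x + t))
          (iteratedDeriv (m+1) g₀ (τ + t)) τ := by
        have := (hasDerivAt_iter hsmooth m (τ + t)).comp τ h2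
        simpa [Function.comp_def] using this
      exact h3.ofReal_comp
    have := (hp.mul he).mul hh
    refine this.congr_deriv ?_
    simp only [hf', smul_eq_mul, Pi.mul_apply]
    ring
  have hint : IntegrableOn f' (Ioi 0) volume := by
    rw [hf']
    exact (((integrable_integrand hν hsmooth hdecay (j-1) m ξ t ht1).smul ((j:ℂ))).add
      ((integrable_integrand hν hsmooth hdecay j m ξ t ht1).smul (-Complex.I * ξ))).add
      (integrable_integrand hν hsmooth hdecay j (m+1) ξ t ht1)
  have htend : Filter.Tendsto f Filter.atTop (nhds 0) :=
    tendsto_integrand_zero hν hsmooth hdecay j m ξ ht1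
  have hcont : ContinuousWithinAt f (Ici 0) 0 :=
    (cont_integrand hsmooth j m ξ t).continuousWithinAt
  have key := integral_Ioi_of_hasDerivAt_of_tendsto hcont hderiv hint htend
  have hsplit : ∫ τ in Ioi (0:ℝ), f' τ
      = (j:ℂ) • Kint g₀ (j-1) m ξ t + (-Complex.I * ξ) • Kint g₀ j m ξ t
        + Kint g₀ j (m+1) ξ t := by
    have hA : Integrable (fun τ : ℝ => (j:ℂ) • ((τ:ℂ)^(j-1) * Complex.exp (-Complex.I * ξ * τ) * ((iteratedDeriv m g₀ (τ + t) : ℝ) : ℂ))) (volume.restrict (Ioi 0)) :=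
      (integrable_integrand hν hsmooth hdecay (j-1) m ξ t ht1).smul ((j:ℂ))
    have hB : Integrable (fun τ : ℝ => (-Complex.I * (ξ:ℂ)) • ((τ:ℂ)^j * Complex.exp (-Complex.I * ξ * τ) * ((iteratedDeriv m g₀ (τ + t) : ℝ) : ℂ))) (volume.restrict (Ioi 0)) :=
      (integrable_integrand hν hsmooth hdecay j m ξ t ht1).smul (-Complex.I * (ξ:ℂ))
    have hC : Integrable (fun τ : ℝ => ((τ:ℂ)^j * Complex.exp (-Complex.I * ξ * τ) * ((iteratedDeriv (m+1) g₀ (τ + t) : ℝ) : ℂ))) (volume.restrict (Ioi 0)) :=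
      integrable_integrand hν hsmooth hdecay j (m+1) ξ t ht1
    have hAB : Integrable (fun τ : ℝ => (j:ℂ) • ((τ:ℂ)^(j-1) * Complex.exp (-Complex.I * ξ * τ) * ((iteratedDeriv m g₀ (τ + t) : ℝ) : ℂ)) + (-Complex.I * (ξ:ℂ)) • ((τ:ℂ)^j * Complex.exp (-Complex.I * ξ * τ) * ((iteratedDeriv m g₀ (τ + t) : ℝ) : ℂ))) (volume.restrict (Ioi 0)) := hA.add hB
    have e1 : (∫ τ in Ioi (0:ℝ), ((j:ℂ) • ((τ:ℂ)^(j-1) * Complex.exp (-Complex.I * ξ * τ) * ((iteratedDeriv m g₀ (τ + t) : ℝ) : ℂ)) + (-Complex.I * (ξ:ℂ)) • ((τ:ℂ)^j * Complex.exp (-Complex.I * ξ * τ) * ((iteratedDeriv m g₀ (τ + t) : ℝ) : ℂ)) + ((τ:ℂ)^j * Complex.exp (-Complex.I * ξ * τ) * ((iteratedDeriv (m+1) g₀ (τ + t) : ℝ) : ℂ))))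
        = (∫ τ in Ioi (0:ℝ), ((j:ℂ) • ((τ:ℂ)^(j-1) * Complex.exp (-Complex.I * ξ * τ) * ((iteratedDeriv m g₀ (τ + t) : ℝ) : ℂ)) + (-Complex.I * (ξ:ℂ)) • ((τ:ℂ)^j * Complex.exp (-Complex.I * ξ * τ) * ((iteratedDeriv m g₀ (τ + t) : ℝ) : ℂ))))
          + ∫ τ in Ioi (0:ℝ), ((τ:ℂ)^j * Complex.exp (-Complex.I * ξ * τ) * ((iteratedDeriv (m+1) g₀ (τ + t) : ℝ) : ℂ)) := integral_add hAB hC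
    have e2 : (∫ τ in Ioi (0:ℝ), ((j:ℂ) • ((τ:ℂ)^(j-1) * Complex.exp (-Complex.I * ξ * τ) * ((iteratedDeriv m g₀ (τ + t) : ℝ) : ℂ)) + (-Complex.I * (ξ:ℂ)) • ((τ:ℂ)^j * Complex.exp (-Complex.I * ξ * τ) * ((iteratedDeriv m g₀ (τ + t) : ℝ) : ℂ))))
        = (∫ τ in Ioi (0:ℝ), (j:ℂ) • ((τ:ℂ)^(j-1) * Complex.exp (-Complex.I * ξ * τ) * ((iteratedDeriv m g₀ (τ + t) : ℝ) : ℂ))) + ∫ τ in Ioi (0:ℝ), (-Complex.I * (ξ:ℂ)) • ((τ:ℂ)^j * Complex.exp (-Complex.I * ξ * τ) * ((iteratedDeriv m g₀ (τ + t) : ℝ) : ℂ)) :=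
      integral_add hA hB
    have e3 : (∫ τ in Ioi (0:ℝ), (j:ℂ) • ((τ:ℂ)^(j-1) * Complex.exp (-Complex.I * ξ * τ) * ((iteratedDeriv m g₀ (τ + t) : ℝ) : ℂ))) = (j:ℂ) • Kint g₀ (j-1) m ξ t :=
      integral_smul _ _
    have e4 : (∫ τ in Ioi (0:ℝ), (-Complex.I * (ξ:ℂ)) • ((τ:ℂ)^j * Complex.exp (-Complex.I * ξ * τ) * ((iteratedDeriv m g₀ (τ + t) : ℝ) : ℂ)))
        = (-Complex.I * (ξ:ℂ)) • Kint g₀ j m ξ t := integral_smul _ _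
    simp only [hf']
    rw [e1, e2, e3, e4]
    rfl
  have hf0 : f 0 = (0:ℂ)^j * ((iteratedDeriv m g₀ t : ℝ) : ℂ) := by
    simp only [hf]
    norm_num
  rw [hsplit, hf0] at key
  simp only [smul_eq_mul] at key
  linear_combination -key

lemma kdecay (hν : 0 < ν) (hsmooth : ContDiff ℝ (⊤ : ℕ∞) g₀)
    (hdecay : ∀ k : ℕ, ∃ C : ℝ, ∀ τ : ℝ, 0 ≤ τ →
      |iteratedDeriv k g₀ τ| ≤ C * Real.exp (-ν * τ)) :
    ∀ (n j m : ℕ), n ≤ j + 1 → ∃ C : ℝ, 0 ≤ C ∧ ∀ ξ t : ℝ, 0 ≤ t →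
      |ξ|^n * ‖Kint g₀ j m ξ t‖ ≤ C * Real.exp (-ν * t) := by
  intro n
  induction n with
  | zero =>
    intro j m _
    obtain ⟨C, hC0, hC⟩ := norm_Kint_le hν hsmooth hdecay j m
    exact ⟨C, hC0, fun ξ t ht => by simpa using hC ξ t ht⟩
  | succ n ih =>
    intro j m hn
    obtain ⟨C₁, h10, h1⟩ := ih (j-1) m (by omega)
    obtain ⟨C₂, h20, h2⟩ := ih j (m+1) (by omega)
    obtain ⟨C₀, h00, h0⟩ := extDecay hν hsmooth hdecay m
    refine ⟨C₀ + (j:ℝ) * C₁ + C₂, by positivity, fun ξ t ht => ?_⟩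
    have hb : |ξ|^n * ‖(0:ℂ)^j * ((iteratedDeriv m g₀ t : ℝ) : ℂ)‖ ≤ C₀ * Real.exp (-ν * t) := by
      cases j with
      | zero =>
        have hn0 : n = 0 := by omega
        subst hn0
        simpa [Complex.norm_real, Real.norm_eq_abs] using h0 t (by linarith)
      | succ s => simp [pow_succ]; positivity
    have hnorm : |ξ| * ‖Kint g₀ j m ξ t‖
        ≤ ‖(0:ℂ)^j * ((iteratedDeriv m g₀ t : ℝ) : ℂ)‖ + (j:ℝ) * ‖Kint g₀ (j-1) m ξ t‖
          + ‖Kint g₀ j (m+1) ξ t‖ := by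
      have heq : |ξ| * ‖Kint g₀ j m ξ t‖ = ‖Complex.I * ξ * Kint g₀ j m ξ t‖ := by
        rw [norm_mul, norm_mul, Complex.norm_I, one_mul, Complex.norm_real, Real.norm_eq_abs]
      rw [heq, ibp hν hsmooth hdecay j m ξ ht]
      refine (norm_add_le _ _).trans ?_
      gcongr
      refine (norm_add_le _ _).trans ?_
      gcongr
      rw [norm_mul]
      simp
    have hξn : (0:ℝ) ≤ |ξ|^n := pow_nonneg (abs_nonneg ξ) n
    have hKn : (0:ℝ) ≤ ‖Kint g₀ j m ξ t‖ := norm_nonneg _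
    calc |ξ|^(n+1) * ‖Kint g₀ j m ξ t‖ = |ξ|^n * (|ξ| * ‖Kint g₀ j m ξ t‖) := by ring
      _ ≤ |ξ|^n * (‖(0:ℂ)^j * ((iteratedDeriv m g₀ t : ℝ) : ℂ)‖
            + (j:ℝ) * ‖Kint g₀ (j-1) m ξ t‖ + ‖Kint g₀ j (m+1) ξ t‖) :=
          mul_le_mul_of_nonneg_left hnorm hξn
      _ = |ξ|^n * ‖(0:ℂ)^j * ((iteratedDeriv m g₀ t : ℝ) : ℂ)‖
            + (j:ℝ) * (|ξ|^n * ‖Kint g₀ (j-1) m ξ t‖) + |ξ|^n * ‖Kint g₀ j (m+1) ξ t‖ := by ring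
      _ ≤ C₀ * Real.exp (-ν * t) + (j:ℝ) * (C₁ * Real.exp (-ν * t)) + C₂ * Real.exp (-ν * t) := by
          exact add_le_add (add_le_add hb
            (mul_le_mul_of_nonneg_left (h1 ξ t ht) (Nat.cast_nonneg j))) (h2 ξ t ht)
      _ = (C₀ + (j:ℝ) * C₁ + C₂) * Real.exp (-ν * t) := by ring

end Aux

theorem stmt0 (g₀ : ℝ → ℝ) (ν : ℝ) (hν : 0 < ν)
    (hsmooth : ContDiff ℝ (⊤ : ℕ∞) g₀) (hg0 : g₀ 0 = 0)
    (hdecay : ∀ k : ℕ, ∃ C : ℝ, ∀ τ : ℝ, 0 ≤ τ →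
      |iteratedDeriv k g₀ τ| ≤ C * Real.exp (-ν * τ)) :
    ∀ k m : ℕ, ∃ C : ℝ, ∀ ξ t : ℝ, 0 ≤ t →
      ‖iteratedDeriv k (fun ξ' => iteratedDeriv m (fun t' => G0 g₀ ξ' t') t) ξ‖
        ≤ C * Real.exp (-ν * t) * (1 + |ξ|) ^ (-(k:ℝ) - 1) := by
  intro k m
  obtain ⟨C₁, h10, h1⟩ := kdecay hν hsmooth hdecay 0 k m (by omega)
  obtain ⟨C₂, h20, h2⟩ := kdecay hν hsmooth hdecay (k+1) k m (by omega)
  refine ⟨2^(k+1) * (C₁ + C₂), fun ξ t ht => ?_⟩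
  have hfun : (fun ξ' => iteratedDeriv m (fun t' => G0 g₀ ξ' t') t)
      = fun ξ' => Kint g₀ 0 m ξ' t :=
    funext fun ξ' => t_iterated hν hsmooth hdecay m ξ' t (by linarith)
  rw [hfun, xi_iterated hν hsmooth hdecay k m (by linarith) ξ]
  have hnormI : ‖(-Complex.I)^k * Kint g₀ k m ξ t‖ = ‖Kint g₀ k m ξ t‖ := by
    rw [norm_mul, norm_pow, norm_neg, Complex.norm_I, one_pow, one_mul]
  rw [hnormI]
  have hP : (0:ℝ) < 1 + |ξ| := by positivity
  have hrpow : (1 + |ξ|) ^ (-(k:ℝ) - 1) = ((1 + |ξ|)^(k+1))⁻¹ := by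
    rw [show -(k:ℝ)-1 = -((k+1:ℕ):ℝ) by push_cast; ring, Real.rpow_neg hP.le,
      Real.rpow_natCast]
  rw [hrpow, ← div_eq_mul_inv, le_div_iff₀ (by positivity)]
  have hK0 : (0:ℝ) ≤ ‖Kint g₀ k m ξ t‖ := norm_nonneg _
  have key1 : ‖Kint g₀ k m ξ t‖ ≤ C₁ * Real.exp (-ν * t) := by
    simpa using h1 ξ t ht
  have key2 : |ξ|^(k+1) * ‖Kint g₀ k m ξ t‖ ≤ C₂ * Real.exp (-ν * t) := h2 ξ t ht
  have h3 : (1 + |ξ|)^(k+1) ≤ 2^(k+1) * (1 + |ξ|^(k+1)) := by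
    have h4 : (1 + |ξ|)^(k+1) ≤ (2 * max 1 |ξ|)^(k+1) := by
      apply pow_le_pow_left₀ (by positivity)
      have := le_max_left 1 |ξ|
      have := le_max_right 1 |ξ|
      linarith
    have h5 : (2 * max 1 |ξ|)^(k+1) = 2^(k+1) * (max 1 |ξ|)^(k+1) := mul_pow 2 _ _
    have h6 : (max 1 |ξ|)^(k+1) ≤ 1 + |ξ|^(k+1) := by
      rcases max_cases 1 |ξ| with ⟨hm, _⟩ | ⟨hm, _⟩ <;> rw [hm]
      · simp only [one_pow]
        have : (0:ℝ) ≤ |ξ|^(k+1) := pow_nonneg (abs_nonneg ξ) _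
        linarith
      · have : (0:ℝ) ≤ 1 := zero_le_one
        linarith
    calc (1 + |ξ|)^(k+1) ≤ 2^(k+1) * (max 1 |ξ|)^(k+1) := by rw [← h5]; exact h4
      _ ≤ 2^(k+1) * (1 + |ξ|^(k+1)) := by
          apply mul_le_mul_of_nonneg_left h6 (by positivity)
  calc ‖Kint g₀ k m ξ t‖ * (1 + |ξ|)^(k+1)
      ≤ ‖Kint g₀ k m ξ t‖ * (2^(k+1) * (1 + |ξ|^(k+1))) :=
        mul_le_mul_of_nonneg_left h3 hK0
    _ = 2^(k+1) * (‖Kint g₀ k m ξ t‖ + |ξ|^(k+1) * ‖Kint g₀ k m ξ t‖) := by ring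
    _ ≤ 2^(k+1) * (C₁ * Real.exp (-ν * t) + C₂ * Real.exp (-ν * t)) := by
        apply mul_le_mul_of_nonneg_left (add_le_add key1 key2) (by positivity)
    _ = 2^(k+1) * (C₁ + C₂) * Real.exp (-ν * t) := by ring
end

section
/- Let F : ℝ → ℝ be a smooth even function satisfying |F^{(k)}(ζ)| ≤ d_k (1+|ζ|)^{-k-k₀} for all k ≥ 0 and some k₀. Define Ψ(ζ) = F'(ζ)/(2ζ) for ζ ≠ 0, extended by Ψ(0) = F''(0)/2. Then Ψ is a smooth even function and satisfies |Ψ^{(k)}(ζ)| ≤ d'_k (1+|ζ|)^{-k-k₀-2} for all k, where each d'_k is a finite linear combination of the d_j. -/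
open scoped ContDiff
open intervalIntegral

lemma aux_even_iter (f : ℝ → ℝ) (hf : ∀ x, f (-x) = f x) (k : ℕ) (x : ℝ) :
    iteratedDeriv k f (-x) = (-1)^k * iteratedDeriv k f x := by
  induction k generalizing x with
  | zero => simpa using hf x
  | succ k ih =>
    have h1 : (fun y => iteratedDeriv k f (-y)) = fun y => (-1:ℝ)^k * iteratedDeriv k f y :=
      funext ih
    have h2 := deriv_comp_neg (f := iteratedDeriv k f) (x := x)
    rw [h1, deriv_const_mul_field] at h2
    simp only [iteratedDeriv_succ, pow_succ]
    linear_combination h2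

lemma aux_rpow_le {e u : ℝ} (hu : 0 ≤ u) (hu1 : u ≤ 1) : (1+u)^e ≤ max 1 ((2:ℝ)^e) := by
  rcases le_or_gt 0 e with he | he
  · refine le_max_of_le_right ?_
    have : ((2:ℝ)) = 1 + 1 := by norm_num
    rw [this]
    exact Real.rpow_le_rpow (by linarith) (by linarith) he
  · exact le_max_of_le_left (Real.rpow_le_one_of_one_le_of_nonpos (by linarith) he.le)

lemma aux_rpow_ge {e u : ℝ} (hu : 0 ≤ u) (hu1 : u ≤ 1) : min 1 ((2:ℝ)^e) ≤ (1+u)^e := by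
  rcases le_or_gt 0 e with he | he
  · refine le_trans (min_le_left _ _) ?_
    calc (1:ℝ) = 1 ^ e := (Real.one_rpow e).symm
    _ ≤ (1+u)^e := Real.rpow_le_rpow zero_le_one (by linarith) he
  · refine le_trans (min_le_right _ _) ?_
    have : ((2:ℝ)) = 1 + 1 := by norm_num
    rw [this]
    exact Real.rpow_le_rpow_of_nonpos (by linarith) (by linarith) he.le

lemma aux_hasDeriv_phi (m : ℕ) (G : ℝ → ℝ) (hG : ContDiff ℝ ∞ G) (ζ : ℝ) :
    HasDerivAt (fun x => ∫ θ in (0:ℝ)..1, θ^m * G (θ*x))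
      (∫ θ in (0:ℝ)..1, θ^(m+1) * deriv G (θ*ζ)) ζ := by
  have hGc : Continuous G := hG.continuous
  have hG' : Continuous (deriv G) := hG.continuous_deriv (by exact_mod_cast le_top)
  have hGd : Differentiable ℝ G := hG.differentiable (by simp)
  obtain ⟨M, hM⟩ := (isCompact_Icc (a := -(|ζ|+1)) (b := |ζ|+1)).exists_bound_of_continuousOn
    hG'.continuousOn
  have key := intervalIntegral.hasDerivAt_integral_of_dominated_loc_of_deriv_le
    (F := fun x t => t^m * G (t*x)) (F' := fun x t => t^(m+1) * deriv G (t*x))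
    (a := 0) (b := 1) (μ := MeasureTheory.volume) (x₀ := ζ) (bound := fun _ => |M|)
    (Metric.ball_mem_nhds ζ one_pos)
    (Filter.Eventually.of_forall fun x =>
      ((continuous_pow m).mul (hGc.comp (continuous_id.mul continuous_const))).aestronglyMeasurable)
    (((continuous_pow m).mul (hGc.comp (continuous_id.mul continuous_const))).intervalIntegrable 0 1)
    (((continuous_pow (m+1)).mul (hG'.comp (continuous_id.mul continuous_const))).aestronglyMeasurable)
    ?_ (intervalIntegrable_const) ?_
  · exact key.2
  · refine Filter.Eventually.of_forall fun t ht x hx => ?_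
    have ht' : 0 < t ∧ t ≤ 1 := by
      rw [Set.uIoc_of_le (by norm_num : (0:ℝ) ≤ 1)] at ht
      exact ⟨ht.1, ht.2⟩
    have hx' : |x| ≤ |ζ| + 1 := by
      have := abs_sub_abs_le_abs_sub x ζ
      have hb : |x - ζ| < 1 := by simpa [Real.dist_eq] using hx
      linarith
    have htx : t * x ∈ Set.Icc (-(|ζ|+1)) (|ζ|+1) := by
      rw [Set.mem_Icc, ← abs_le]
      calc |t*x| = |t| * |x| := abs_mul t x
      _ ≤ 1 * (|ζ|+1) := by
          apply mul_le_mul (by rw [abs_of_pos ht'.1]; exact ht'.2) hx' (abs_nonneg _) zero_le_one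
      _ = |ζ| + 1 := one_mul _
    have := hM _ htx
    calc ‖t^(m+1) * deriv G (t*x)‖ = |t|^(m+1) * ‖deriv G (t*x)‖ := by
          rw [norm_mul, norm_pow]; rfl
    _ ≤ 1 * |M| := by
        apply mul_le_mul _ (le_trans this (le_abs_self M)) (norm_nonneg _) zero_le_one
        exact pow_le_one₀ (abs_nonneg t) (by rw [abs_of_pos ht'.1]; exact ht'.2)
    _ = |M| := one_mul _
  · refine Filter.Eventually.of_forall fun t _ x _ => ?_
    have h1 : HasDerivAt (fun x : ℝ => t * x) t x := by
      simpa using (hasDerivAt_id x).const_mul t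
    have h2 : HasDerivAt (fun x : ℝ => G (t*x)) (deriv G (t*x) * t) x :=
      ((hGd (t*x)).hasDerivAt).comp x h1
    have h3 := h2.const_mul (t^m)
    convert h3 using 1
    · rfl
    ring


lemma aux_inv_bound (j : ℕ) (ζ : ℝ) (hζ : 1 ≤ ζ) :
    |iteratedDeriv j (fun x : ℝ => (2*x)⁻¹) ζ|
      ≤ (2⁻¹ * |∏ l ∈ Finset.range j, (-1 - (l:ℝ))| * (2:ℝ)^(((j:ℕ):ℝ)+1)) *
        (1+ζ)^(-(1:ℝ)-(j:ℕ)) := by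
  have h0 : (0:ℝ) < ζ := lt_of_lt_of_le one_pos hζ
  have hg : (fun x : ℝ => (2*x)⁻¹) = fun x : ℝ => 2⁻¹ * x⁻¹ := funext fun x => by
    rw [mul_inv]
  have hit : ∀ n, deriv^[n] (fun x : ℝ => 2⁻¹ * x⁻¹) = fun x => 2⁻¹ * deriv^[n] Inv.inv x := by
    intro n
    induction n with
    | zero => rfl
    | succ n ih =>
      rw [Function.iterate_succ_apply', ih]
      funext x
      rw [deriv_const_mul_field, Function.iterate_succ_apply']
  rw [hg, iteratedDeriv_eq_iterate, hit j]
  simp only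
  rw [show deriv^[j] (Inv.inv : ℝ → ℝ) ζ = (∏ l ∈ Finset.range j, (-1 - (l:ℝ))) * ζ ^ (-1 - j : ℤ) from by
    rw [show (Inv.inv : ℝ → ℝ) = (· ^ (-1 : ℤ)) from by funext x; simp]
    exact_mod_cast iter_deriv_zpow (-1) ζ j]
  rw [← mul_assoc, abs_mul, abs_mul]
  have habs : |ζ ^ (-1 - (j:ℤ))| = ζ ^ ((-1:ℝ) - (j:ℕ)) := by
    rw [abs_of_pos (zpow_pos h0 _), ← Real.rpow_intCast ζ (-1 - (j:ℤ))]
    norm_num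
  rw [habs]
  have hkey : ζ ^ ((-1:ℝ) - (j:ℕ)) ≤ (2:ℝ)^(((j:ℕ):ℝ)+1) * (1+ζ)^(-(1:ℝ)-(j:ℕ)) := by
    have h2z : (2:ℝ)*ζ ≤ 2*ζ := le_refl _
    have hle : (1+ζ) ≤ 2*ζ := by linarith
    have h1 : ((2:ℝ)*ζ) ^ ((-1:ℝ)-(j:ℕ)) ≤ (1+ζ) ^ ((-1:ℝ)-(j:ℕ)) :=
      Real.rpow_le_rpow_of_nonpos (by linarith) hle
        (by have : (0:ℝ) ≤ ((j:ℕ):ℝ) := Nat.cast_nonneg j; linarith)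
    have h2 : ((2:ℝ)*ζ) ^ ((-1:ℝ)-(j:ℕ)) = (2:ℝ)^((-1:ℝ)-(j:ℕ)) * ζ ^ ((-1:ℝ)-(j:ℕ)) :=
      Real.mul_rpow (by norm_num) h0.le
    have h3 : (0:ℝ) < (2:ℝ)^(((j:ℕ):ℝ)+1) := Real.rpow_pos_of_pos two_pos _
    have h4 : (2:ℝ)^(((j:ℕ):ℝ)+1) * (2:ℝ)^((-1:ℝ)-(j:ℕ)) = 1 := by
      rw [← Real.rpow_add two_pos, show ((j:ℕ):ℝ)+1+(-(1:ℝ)-(j:ℕ)) = 0 by ring,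
        Real.rpow_zero]
    calc ζ ^ ((-1:ℝ) - (j:ℕ))
        = (2:ℝ)^(((j:ℕ):ℝ)+1) * ((2:ℝ)^((-1:ℝ)-(j:ℕ)) * ζ ^ ((-1:ℝ)-(j:ℕ))) := by
          rw [← mul_assoc, h4, one_mul]
    _ = (2:ℝ)^(((j:ℕ):ℝ)+1) * ((2:ℝ)*ζ) ^ ((-1:ℝ)-(j:ℕ)) := by rw [h2]
    _ ≤ (2:ℝ)^(((j:ℕ):ℝ)+1) * (1+ζ) ^ ((-1:ℝ)-(j:ℕ)) := by
          exact mul_le_mul_of_nonneg_left h1 h3.le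
  calc |(2:ℝ)⁻¹| * |∏ l ∈ Finset.range j, (-1 - (l:ℝ))| * ζ ^ ((-1:ℝ) - (j:ℕ))
      ≤ |(2:ℝ)⁻¹| * |∏ l ∈ Finset.range j, (-1 - (l:ℝ))| *
        ((2:ℝ)^(((j:ℕ):ℝ)+1) * (1+ζ)^(-(1:ℝ)-(j:ℕ))) := by
        exact mul_le_mul_of_nonneg_left hkey (by positivity)
  _ = (2⁻¹ * |∏ l ∈ Finset.range j, (-1 - (l:ℝ))| * (2:ℝ)^(((j:ℕ):ℝ)+1)) *
        (1+ζ)^(-(1:ℝ)-(j:ℕ)) := by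
        rw [abs_of_pos (by norm_num : (0:ℝ) < 2⁻¹)]
        ring

lemma aux_large (F : ℝ → ℝ) (hF : ContDiff ℝ ∞ F) (Ψ : ℝ → ℝ)
    (hΨ : ∀ x : ℝ, x ≠ 0 → Ψ x = deriv F x / (2*x)) (k : ℕ) (ζ : ℝ) (hζ : 1 ≤ ζ) :
    |iteratedDeriv k Ψ ζ| ≤ ∑ i ∈ Finset.range (k+1),
      (k.choose i : ℝ) * |iteratedDeriv (i+1) F ζ| *
        ((2⁻¹ * |∏ l ∈ Finset.range (k-i), (-1 - (l:ℝ))| * (2:ℝ)^(((k-i:ℕ):ℝ)+1)) *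
          (1+ζ)^(-(1:ℝ)-(k-i:ℕ))) := by
  have h0 : (0:ℝ) < ζ := lt_of_lt_of_le one_pos hζ
  set s : Set ℝ := Set.Ioi (0:ℝ) with hs_def
  have hs : IsOpen s := isOpen_Ioi
  have hζs : ζ ∈ s := h0
  have hgsm : ContDiffOn ℝ ∞ (fun x : ℝ => (2*x)⁻¹) s := by
    apply ContDiffOn.inv
    · exact (contDiff_const.mul contDiff_id).contDiffOn
    · intro x hx
      have : (0:ℝ) < x := hx
      positivity
  have hfsm : ContDiffOn ℝ ∞ (deriv F) s := ((contDiff_infty_iff_deriv.mp hF).2).contDiffOn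
  have heqon : Set.EqOn Ψ (fun x => deriv F x * (2*x)⁻¹) s := fun x hx => by
    have : (0:ℝ) < x := hx
    rw [hΨ x (ne_of_gt this), div_eq_mul_inv]
  have step1 : |iteratedDeriv k Ψ ζ| =
      ‖iteratedFDerivWithin ℝ k (fun x => deriv F x * (2*x)⁻¹) s ζ‖ := by
    rw [← iteratedFDerivWithin_congr heqon hζs, iteratedFDerivWithin_of_isOpen k hs hζs,
      norm_iteratedFDeriv_eq_norm_iteratedDeriv, Real.norm_eq_abs]
  rw [step1]
  refine le_trans (norm_iteratedFDerivWithin_mul_le hfsm hgsm hs.uniqueDiffOn hζs (by exact_mod_cast le_top : (k : WithTop ℕ∞) ≤ ∞)) ?_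
  apply Finset.sum_le_sum
  intro i hi
  have hfn : ‖iteratedFDerivWithin ℝ i (deriv F) s ζ‖ = |iteratedDeriv (i+1) F ζ| := by
    rw [iteratedFDerivWithin_of_isOpen i hs hζs, norm_iteratedFDeriv_eq_norm_iteratedDeriv,
      Real.norm_eq_abs, ← iteratedDeriv_succ']
  have hgn : ‖iteratedFDerivWithin ℝ (k-i) (fun x : ℝ => (2*x)⁻¹) s ζ‖ =
      |iteratedDeriv (k-i) (fun x : ℝ => (2*x)⁻¹) ζ| := by
    rw [iteratedFDerivWithin_of_isOpen (k-i) hs hζs,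
      norm_iteratedFDeriv_eq_norm_iteratedDeriv, Real.norm_eq_abs]
  rw [hfn, hgn, mul_assoc, mul_assoc]
  refine mul_le_mul_of_nonneg_left ?_ (by positivity)
  exact mul_le_mul_of_nonneg_left (aux_inv_bound (k-i) ζ hζ) (abs_nonneg _)

theorem stmt3 (F : ℝ → ℝ) (k₀ : ℝ) (d : ℕ → ℝ)
    (hsmooth : ContDiff ℝ (⊤ : ℕ∞) F) (heven : ∀ ζ : ℝ, F (-ζ) = F ζ)
    (hdecay : ∀ (k : ℕ) (ζ : ℝ),
      |iteratedDeriv k F ζ| ≤ d k * (1 + |ζ|) ^ (-(k:ℝ) - k₀)) :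
    ∃ Ψ : ℝ → ℝ,
      (∀ ζ : ℝ, ζ ≠ 0 → Ψ ζ = deriv F ζ / (2 * ζ)) ∧
      Ψ 0 = iteratedDeriv 2 F 0 / 2 ∧
      ContDiff ℝ (⊤ : ℕ∞) Ψ ∧ (∀ ζ : ℝ, Ψ (-ζ) = Ψ ζ) ∧
      (∀ k : ℕ, ∃ d' : ℝ, (∃ (n : ℕ) (a : Fin n → ℝ) (j : Fin n → ℕ),
          d' = ∑ i, a i * d (j i)) ∧
        ∀ ζ : ℝ, |iteratedDeriv k Ψ ζ| ≤ d' * (1 + |ζ|) ^ (-(k:ℝ) - k₀ - 2)) := by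
  have hF : ContDiff ℝ ∞ F := hsmooth.of_le (by simp)
  have hf0 : deriv F 0 = 0 := by
    have := aux_even_iter F heven 1 0
    simp [iteratedDeriv_one] at this
    linarith
  set Ψ : ℝ → ℝ := fun ζ => dslope (deriv F) 0 ζ / 2 with hΨdef
  have h1 : ∀ ζ : ℝ, ζ ≠ 0 → Ψ ζ = deriv F ζ / (2 * ζ) := by
    intro ζ hζ
    rw [hΨdef]
    simp only
    rw [dslope_of_ne _ hζ, slope_def_field, hf0]
    rw [div_div]
    ring_nf
  have h2 : Ψ 0 = iteratedDeriv 2 F 0 / 2 := by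
    rw [hΨdef]
    simp only [dslope_same]
    congr 1
    rw [show (2:ℕ) = 1 + 1 from rfl, iteratedDeriv_succ, iteratedDeriv_one]
  -- integral representation
  have hDsm : ∀ j : ℕ, ContDiff ℝ ∞ (iteratedDeriv j F) := fun j => by
    rw [iteratedDeriv_eq_iterate]; exact hF.iterate_deriv j
  have hΨint : ∀ ζ : ℝ, Ψ ζ = (∫ θ in (0:ℝ)..1, iteratedDeriv 2 F (θ*ζ)) / 2 := by
    intro ζ
    rcases eq_or_ne ζ 0 with rfl | hζ
    · rw [h2]
      congr 1
      simp
    · rw [h1 ζ hζ]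
      have hD2 : ∀ y : ℝ, HasDerivAt (deriv F) (iteratedDeriv 2 F y) y := by
        intro y
        have : iteratedDeriv 2 F y = deriv (deriv F) y := by
          rw [show (2:ℕ) = 1 + 1 from rfl, iteratedDeriv_succ, iteratedDeriv_one]
        rw [this]
        have hdiff : DifferentiableAt ℝ (deriv F) y := by
          have := ((hDsm 1).differentiable (by simp)) y
          rwa [iteratedDeriv_one] at this
        exact hdiff.hasDerivAt
      have hftc : ∫ θ in (0:ℝ)..1, iteratedDeriv 2 F (θ*ζ) * ζ
          = deriv F (1*ζ) - deriv F (0*ζ) := by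
        apply intervalIntegral.integral_eq_sub_of_hasDerivAt
          (f := fun θ : ℝ => deriv F (θ*ζ)) (f' := fun θ : ℝ => iteratedDeriv 2 F (θ*ζ) * ζ)
        · intro θ _
          exact (hD2 (θ*ζ)).comp θ (by simpa using (hasDerivAt_id θ).mul_const ζ)
        · apply Continuous.intervalIntegrable
          exact (((hDsm 2).continuous).comp (continuous_id.mul continuous_const)).mul
            continuous_const
      rw [intervalIntegral.integral_mul_const] at hftc
      simp only [one_mul, zero_mul, hf0, sub_zero] at hftc
      have hint : (∫ (x : ℝ) in (0:ℝ)..1, iteratedDeriv 2 F (x * ζ)) = deriv F ζ / ζ := by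
        rw [eq_div_iff hζ]; exact hftc
      rw [hint, div_div, mul_comm ζ 2]
  -- evenness of Ψ
  have hΨeven : ∀ ζ : ℝ, Ψ (-ζ) = Ψ ζ := by
    intro ζ
    rw [hΨint, hΨint]
    congr 1
    have hpt : ∀ θ : ℝ, iteratedDeriv 2 F (θ * -ζ) = iteratedDeriv 2 F (θ*ζ) := by
      intro θ
      rw [show θ * -ζ = -(θ*ζ) by ring]
      simpa using aux_even_iter F heven 2 (θ*ζ)
    simp only [hpt]
  -- Φ machinery
  set Φ : ℕ → ℝ → ℝ := fun m x => ∫ θ in (0:ℝ)..1, θ^m * iteratedDeriv (m+2) F (θ*x)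
    with hΦdef
  have hΦd : ∀ (m : ℕ) (ζ : ℝ), HasDerivAt (Φ m) (Φ (m+1) ζ) ζ := by
    intro m ζ
    have h := aux_hasDeriv_phi m (iteratedDeriv (m+2) F) (hDsm (m+2)) ζ
    have hde : deriv (iteratedDeriv (m+2) F) = iteratedDeriv (m+3) F :=
      (iteratedDeriv_succ (n := m+2)).symm
    rw [hde] at h
    exact h
  have hΨeq : Ψ = fun ζ => Φ 0 ζ / 2 := funext fun ζ => by
    rw [hΨint ζ, hΦdef]
    simp
  have hiter : ∀ k : ℕ, iteratedDeriv k Ψ = fun ζ => Φ k ζ / 2 := by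
    intro k
    induction k with
    | zero => simpa [iteratedDeriv_zero] using hΨeq
    | succ k ih =>
      rw [iteratedDeriv_succ, ih]
      funext ζ
      rw [deriv_div_const, (hΦd k ζ).deriv]
  -- nonnegativity of d
  have hd : ∀ j : ℕ, 0 ≤ d j := by
    intro j
    have h := hdecay j 0
    simp only [abs_zero, add_zero, Real.one_rpow, mul_one] at h
    exact le_trans (abs_nonneg _) h
  have hΨsmooth : ContDiff ℝ (⊤ : ℕ∞) Ψ := by
    apply contDiff_of_differentiable_iteratedDeriv
    intro m _
    rw [hiter m]
    exact fun ζ => ((hΦd m ζ).differentiableAt).div_const 2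
  refine ⟨Ψ, h1, h2, hΨsmooth, hΨeven, ?_⟩
  intro k
  set e : ℝ := -(k:ℝ) - k₀ - 2 with he
  have hrpos : ∀ ζ : ℝ, (0:ℝ) < (1+|ζ|)^e := fun ζ => Real.rpow_pos_of_pos (by positivity) e
  set m1 : ℝ := min 1 ((2:ℝ)^e) with hm1def
  set m2 : ℝ := max 1 ((2:ℝ)^e) with hm2def
  have hm1 : 0 < m1 := lt_min one_pos (Real.rpow_pos_of_pos two_pos e)
  have hm2 : 0 < m2 := lt_of_lt_of_le one_pos (le_max_left _ _)
  set coef : ℕ → ℝ := fun i => (k.choose i : ℝ) *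
    ((2:ℝ)⁻¹ * |∏ l ∈ Finset.range (k-i), (-1 - (l:ℝ))| * (2:ℝ)^(((k-i:ℕ):ℝ)+1)) with hcoef
  have hcoef_nonneg : ∀ i, 0 ≤ coef i := by
    intro i
    rw [hcoef]
    positivity
  set d' : ℝ := (∑ i ∈ Finset.range (k+1), coef i * d (i+1)) + (m2/m1/2) * d (k+2) with hd'
  have hd'2_nonneg : 0 ≤ (m2/m1/2) * d (k+2) := mul_nonneg (by positivity) (hd _)
  have hd'1_nonneg : 0 ≤ ∑ i ∈ Finset.range (k+1), coef i * d (i+1) :=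
    Finset.sum_nonneg fun i _ => mul_nonneg (hcoef_nonneg i) (hd _)
  refine ⟨d', ⟨k+2, Fin.snoc (fun i : Fin (k+1) => coef i) (m2/m1/2),
    Fin.snoc (fun i : Fin (k+1) => (i:ℕ)+1) (k+2), ?_⟩, ?_⟩
  · rw [Fin.sum_univ_castSucc]
    simp only [Fin.snoc_castSucc, Fin.snoc_last]
    rw [hd', Fin.sum_univ_eq_sum_range (fun i => coef i * d (i+1)) (k+1)]
  -- the bound
  have hmain : ∀ ζ : ℝ, 0 ≤ ζ → |iteratedDeriv k Ψ ζ| ≤ d' * (1+|ζ|)^e := by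
    intro ζ hζ0
    rw [abs_of_nonneg hζ0]
    rcases le_total ζ 1 with hle | hge
    -- small case
    · have hib : |Φ k ζ| ≤ (d (k+2) * m2) * |1 - 0| := by
        rw [hΦdef]
        simp only
        rw [← Real.norm_eq_abs]
        apply intervalIntegral.norm_integral_le_of_norm_le_const
        intro θ hθ
        have hθ' : 0 < θ ∧ θ ≤ 1 := by
          rw [Set.uIoc_of_le (by norm_num : (0:ℝ) ≤ 1)] at hθ
          exact ⟨hθ.1, hθ.2⟩
        have h1θ : |θ| ≤ 1 := by rw [abs_of_pos hθ'.1]; exact hθ'.2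
        have htζ : |θ*ζ| ≤ 1 := by
          rw [abs_mul]
          calc |θ| * |ζ| ≤ 1 * 1 := by
                apply mul_le_mul h1θ (by rw [abs_of_nonneg hζ0]; exact hle)
                  (abs_nonneg _) zero_le_one
          _ = 1 := one_mul 1
        have hD := hdecay (k+2) (θ*ζ)
        have hrle : (1+|θ*ζ|) ^ (-((k+2:ℕ):ℝ) - k₀) ≤ m2 := by
          rw [show -((k+2:ℕ):ℝ) - k₀ = e by rw [he]; push_cast; ring]
          exact aux_rpow_le (abs_nonneg _) htζ
        calc ‖θ^k * iteratedDeriv (k+2) F (θ*ζ)‖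
            = |θ|^k * |iteratedDeriv (k+2) F (θ*ζ)| := by
              rw [Real.norm_eq_abs, abs_mul, abs_pow]
        _ ≤ 1 * (d (k+2) * m2) := by
            apply mul_le_mul (pow_le_one₀ (abs_nonneg _) h1θ)
              (le_trans hD (mul_le_mul_of_nonneg_left hrle (hd _)))
              (abs_nonneg _) zero_le_one
        _ = d (k+2) * m2 := one_mul _
      have hiv : |iteratedDeriv k Ψ ζ| ≤ d (k+2) * m2 / 2 := by
        rw [hiter k]
        simp only [abs_div, abs_two]
        have : |Φ k ζ| ≤ d (k+2) * m2 := by simpa using hib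
        linarith
      refine le_trans hiv ?_
      have hstep : d (k+2) * m2 / 2 ≤ ((m2/m1/2) * d (k+2)) * (1+ζ)^e := by
        have hr : m1 ≤ (1+ζ)^e := by
          have := aux_rpow_ge (e := e) (u := ζ) hζ0 hle
          rwa [hm1def]
        calc d (k+2) * m2 / 2 = ((m2/m1/2) * d (k+2)) * m1 := by
              field_simp
        _ ≤ ((m2/m1/2) * d (k+2)) * (1+ζ)^e := by
            apply mul_le_mul_of_nonneg_left hr (by positivity)
      refine le_trans hstep ?_
      apply mul_le_mul_of_nonneg_right _ (Real.rpow_pos_of_pos (by linarith) e).le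
      rw [hd']
      linarith
    -- large case
    · have hlarge := aux_large F hF Ψ h1 k ζ hge
      refine le_trans hlarge (le_trans (Finset.sum_le_sum
        (g := fun i => coef i * d (i+1) * (1+ζ)^e) fun i hi => ?_) ?_)
      case refine_2 =>
        rw [hd', add_mul, Finset.sum_mul]
        have h0' : (0:ℝ) ≤ (m2/m1/2) * d (k+2) * (1+ζ)^e :=
          mul_nonneg hd'2_nonneg (Real.rpow_pos_of_pos (by linarith) e).le
        apply le_add_of_nonneg_right h0'
      have hik : i ≤ k := Finset.mem_range_succ_iff.mp hi
      have hcast : ((k-i:ℕ):ℝ) = (k:ℝ) - (i:ℝ) := by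
        rw [Nat.cast_sub hik]
      have hD := hdecay (i+1) ζ
      have h1ζ : (0:ℝ) < 1 + ζ := by linarith
      have hmerge : (1+ζ) ^ (-((i+1:ℕ):ℝ) - k₀) * (1+ζ)^(-(1:ℝ)-(k-i:ℕ)) = (1+ζ)^e := by
        rw [← Real.rpow_add h1ζ, he, hcast]
        push_cast
        ring_nf
      calc (k.choose i : ℝ) * |iteratedDeriv (i+1) F ζ| *
            ((2⁻¹ * |∏ l ∈ Finset.range (k-i), (-1 - (l:ℝ))| * (2:ℝ)^(((k-i:ℕ):ℝ)+1)) *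
              (1+ζ)^(-(1:ℝ)-(k-i:ℕ)))
          ≤ (k.choose i : ℝ) * (d (i+1) * (1+ζ) ^ (-((i+1:ℕ):ℝ) - k₀)) *
            ((2⁻¹ * |∏ l ∈ Finset.range (k-i), (-1 - (l:ℝ))| * (2:ℝ)^(((k-i:ℕ):ℝ)+1)) *
              (1+ζ)^(-(1:ℝ)-(k-i:ℕ))) := by
            apply mul_le_mul_of_nonneg_right _ (by positivity)
            apply mul_le_mul_of_nonneg_left _ (Nat.cast_nonneg _)
            calc |iteratedDeriv (i+1) F ζ| ≤ d (i+1) * (1+|ζ|) ^ (-((i+1:ℕ):ℝ) - k₀) := by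
                  have := hdecay (i+1) ζ
                  push_cast at this ⊢
                  exact this
            _ = d (i+1) * (1+ζ) ^ (-((i+1:ℕ):ℝ) - k₀) := by rw [abs_of_nonneg hζ0]
      _ = coef i * d (i+1) * ((1+ζ) ^ (-((i+1:ℕ):ℝ) - k₀) * (1+ζ)^(-(1:ℝ)-(k-i:ℕ))) := by
            rw [hcoef]
            ring
      _ = coef i * d (i+1) * (1+ζ)^e := by rw [hmerge]
  -- conclude for all ζ
  intro ζ
  rcases le_total 0 ζ with hpos | hneg
  · exact hmain ζ hpos
  · have hval : |iteratedDeriv k Ψ ζ| = |iteratedDeriv k Ψ (-ζ)| := by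
      have := aux_even_iter Ψ hΨeven k (-ζ)
      rw [neg_neg] at this
      rw [this, abs_mul, abs_pow, abs_neg, abs_one, one_pow, one_mul]
    rw [hval, show (1+|ζ|) = (1+|-ζ|) by rw [abs_neg]]
    exact hmain (-ζ) (by linarith)
end

section
/- Let V : ℝ² → ℝ satisfy |∂^α V(y)| ≤ C_α (1+|y|)^{-|α|-κ} with κ > 1, and let T = ω² Σ_j ∂_{y_j} φ(μy) ∂_{y_j} where φ is smooth, bounded with bounded derivatives, φ(0) = 0, and ω is bounded. Then W = T V satisfies ‖W‖_{H^s(ℝ²)} = O(μ) as μ → 0⁺, for every s ∈ ℝ. -/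
open MeasureTheory Set
open scoped FourierTransform

/-- `j`-th partial derivative. -/
noncomputable def pd (j : Fin 2) (u : EuclideanSpace ℝ (Fin 2) → ℂ) :
    EuclideanSpace ℝ (Fin 2) → ℂ :=
  fun y => fderiv ℝ u y (EuclideanSpace.single j 1)

/-- `T = ω² Σⱼ ∂ⱼ φ(μy) ∂ⱼ`. -/
noncomputable def Twop (φ : EuclideanSpace ℝ (Fin 2) → ℝ) (ω μ : ℝ)
    (u : EuclideanSpace ℝ (Fin 2) → ℂ) : EuclideanSpace ℝ (Fin 2) → ℂ :=
  fun y => (ω^2 : ℂ) * ∑ j : Fin 2, pd j (fun y' => ((φ (μ • y') : ℝ) : ℂ) * pd j u y') y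

/-- Fourier-theoretic Sobolev `H^s` norm on `ℝ²`. -/
noncomputable def sobNorm (s : ℝ) (u : EuclideanSpace ℝ (Fin 2) → ℂ) : ENNReal :=
  eLpNorm (fun p : EuclideanSpace ℝ (Fin 2) =>
    ((1 + ‖p‖^2) ^ (s/2) : ℝ) • (𝓕 u p)) 2 volume

namespace Stmt15Aux

noncomputable abbrev E2 := EuclideanSpace ℝ (Fin 2)

lemma pd_eq (j : Fin 2) (u : E2 → ℂ) :
    pd j u = (ContinuousLinearMap.apply ℝ ℂ (EuclideanSpace.single j 1)) ∘ (fderiv ℝ u) := rfl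

lemma pd_contDiff (j : Fin 2) (u : E2 → ℂ) (hu : ContDiff ℝ ((⊤:ℕ∞):WithTop ℕ∞) u) :
    ContDiff ℝ ((⊤:ℕ∞):WithTop ℕ∞) (pd j u) := by
  rw [pd_eq]
  have hder : ContDiff ℝ ((⊤:ℕ∞):WithTop ℕ∞) (fderiv ℝ u) := hu.fderiv_right (by simp)
  exact (ContinuousLinearMap.apply ℝ ℂ (EuclideanSpace.single j 1)).contDiff.comp hder

lemma pd_norm_le (j : Fin 2) (u : E2 → ℂ) (hu : ContDiff ℝ ((⊤:ℕ∞):WithTop ℕ∞) u)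
    (m : ℕ) (y : E2) :
    ‖iteratedFDeriv ℝ m (pd j u) y‖ ≤ ‖iteratedFDeriv ℝ (m+1) u y‖ := by
  have hder : ContDiff ℝ ((⊤:ℕ∞):WithTop ℕ∞) (fderiv ℝ u) := hu.fderiv_right (by simp)
  rw [pd_eq, ContinuousLinearMap.iteratedFDeriv_comp_left _ hder.contDiffAt (by exact_mod_cast le_top)]
  calc ‖(ContinuousLinearMap.apply ℝ ℂ (EuclideanSpace.single j 1)).compContinuousMultilinearMap
        (iteratedFDeriv ℝ m (fderiv ℝ u) y)‖
      ≤ ‖(ContinuousLinearMap.apply ℝ ℂ (EuclideanSpace.single j (1:ℝ)))‖ *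
        ‖iteratedFDeriv ℝ m (fderiv ℝ u) y‖ :=
        ContinuousLinearMap.norm_compContinuousMultilinearMap_le _ _
    _ ≤ 1 * ‖iteratedFDeriv ℝ (m+1) u y‖ := by
        rw [norm_iteratedFDeriv_fderiv]
        gcongr
        apply ContinuousLinearMap.opNorm_le_bound _ zero_le_one
        intro f
        calc ‖f (EuclideanSpace.single j (1:ℝ))‖
            ≤ ‖f‖ * ‖EuclideanSpace.single j (1:ℝ)‖ := f.le_opNorm _
          _ = 1 * ‖f‖ := by rw [EuclideanSpace.norm_single]; simp [mul_comm]
    _ = ‖iteratedFDeriv ℝ (m+1) u y‖ := one_mul _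

/-- Main derivative bound: every iterated derivative of `Twop φ ω μ V` is bounded by
`c * μ * (1+‖y‖)^(-1-κ)`, uniformly in `μ ∈ (0,1]`. -/
lemma W_bound (V : E2 → ℝ) (κ : ℝ) (hκ : 1 < κ)
    (hVsmooth : ContDiff ℝ (⊤ : ℕ∞) V)
    (hVdecay : ∀ n : ℕ, ∃ C : ℝ, ∀ y,
      ‖iteratedFDeriv ℝ n V y‖ ≤ C * (1 + ‖y‖) ^ (-(n:ℝ) - κ))
    (φ : E2 → ℝ) (hφsmooth : ContDiff ℝ (⊤ : ℕ∞) φ)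
    (hφ0 : φ 0 = 0)
    (hφbd : ∀ n : ℕ, ∃ C : ℝ, ∀ z, ‖iteratedFDeriv ℝ n φ z‖ ≤ C)
    (ω ω₀ : ℝ) (hω : |ω| ≤ ω₀) :
    ∀ k : ℕ, ∃ c : ℝ, 0 ≤ c ∧ ∀ μ : ℝ, 0 < μ → μ ≤ 1 → ∀ y,
      ‖iteratedFDeriv ℝ k (Twop φ ω μ (fun y => (V y : ℂ))) y‖
        ≤ c * μ * (1+‖y‖) ^ (-(1:ℝ)-κ) := by
  classical
  obtain ⟨CV, hCV⟩ := Classical.axiomOfChoice hVdecay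
  obtain ⟨Bφ, hBφ⟩ := Classical.axiomOfChoice hφbd
  set CV' : ℕ → ℝ := fun n => max (CV n) 0 with hCV'def
  set Bφ' : ℕ → ℝ := fun n => max (Bφ n) 0 with hBφ'def
  have hCV'0 : ∀ n, 0 ≤ CV' n := fun n => le_max_right _ _
  have hBφ'0 : ∀ n, 0 ≤ Bφ' n := fun n => le_max_right _ _
  have hCV' : ∀ n y, ‖iteratedFDeriv ℝ n V y‖ ≤ CV' n * (1 + ‖y‖) ^ (-(n:ℝ) - κ) := by
    intro n y
    refine (hCV n y).trans ?_
    have : (0:ℝ) ≤ (1 + ‖y‖) ^ (-(n:ℝ) - κ) := Real.rpow_nonneg (by positivity) _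
    exact mul_le_mul_of_nonneg_right (le_max_left _ _) this
  have hBφ' : ∀ n z, ‖iteratedFDeriv ℝ n φ z‖ ≤ Bφ' n := fun n z => (hBφ n z).trans (le_max_left _ _)
  -- complexified V
  set Vc : E2 → ℂ := fun y => ((V y : ℝ) : ℂ) with hVcdef
  have hVc : ContDiff ℝ ((⊤:ℕ∞):WithTop ℕ∞) Vc :=
    Complex.ofRealCLM.contDiff.comp (hVsmooth.of_le (by simp))
  have hVcnorm : ∀ m y, ‖iteratedFDeriv ℝ m Vc y‖ = ‖iteratedFDeriv ℝ m V y‖ := by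
    intro m y
    exact Complex.ofRealLI.norm_iteratedFDeriv_comp_left hVsmooth.contDiffAt (by exact_mod_cast le_top)
  -- bound on φ itself
  have hφlin : ∀ z : E2, ‖φ z‖ ≤ Bφ' 1 * ‖z‖ := by
    intro z
    have key : ∀ x : E2, ‖fderiv ℝ φ x‖ ≤ Bφ' 1 := by
      intro x
      have h0 : ‖iteratedFDeriv ℝ 0 (fderiv ℝ φ) x‖ = ‖fderiv ℝ φ x‖ := norm_iteratedFDeriv_zero
      rw [← h0, norm_iteratedFDeriv_fderiv]
      exact hBφ' 1 x
    have h := Convex.norm_image_sub_le_of_norm_fderiv_le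
      (f := φ) (C := Bφ' 1) (s := Set.univ)
      (fun x _ => (hφsmooth.differentiable (by simp)).differentiableAt)
      (fun x _ => key x) convex_univ (Set.mem_univ 0) (Set.mem_univ z)
    simpa [hφ0] using h
  -- constants
  set D : ℕ → ℝ := fun i => if i = 0 then Bφ' 1 else Bφ' i with hDdef
  have hD0 : ∀ i, 0 ≤ D i := by intro i; by_cases h : i = 0 <;> simp [hDdef, h, hBφ'0]
  set cg : ℕ → ℝ := fun m => ∑ i ∈ Finset.range (m+1),
    (m.choose i : ℝ) * D i * CV' (m - i + 1) with hcgdef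
  have hcg0 : ∀ m, 0 ≤ cg m := by
    intro m
    apply Finset.sum_nonneg
    intro i _
    have := hD0 i
    have := hCV'0 (m - i + 1)
    positivity
  intro k
  refine ⟨2 * ω₀^2 * cg (k+1), by positivity, ?_⟩
  intro μ hμ0 hμ1 y
  have hω₀0 : 0 ≤ ω₀ := le_trans (abs_nonneg ω) hω
  -- the scaled φ
  set φμ : E2 → ℂ := fun y => ((φ (μ • y) : ℝ) : ℂ) with hφμdef
  have hφμsmooth : ContDiff ℝ ((⊤:ℕ∞):WithTop ℕ∞) φμ := by
    have h1 : φμ = (fun z => ((φ z : ℝ):ℂ)) ∘ (μ • (ContinuousLinearMap.id ℝ E2)) := rfl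
    rw [h1]
    exact (Complex.ofRealCLM.contDiff.comp (hφsmooth.of_le (by simp))).comp
      (μ • (ContinuousLinearMap.id ℝ E2)).contDiff
  -- derivative bounds for φμ
  have hφμi : ∀ i : ℕ, ∀ z : E2, ‖iteratedFDeriv ℝ i φμ z‖ ≤ Bφ' i * μ ^ i := by
    intro i z
    have hφc : ContDiff ℝ (⊤ : ℕ∞) (fun z => ((φ z : ℝ):ℂ)) := Complex.ofRealCLM.contDiff.comp hφsmooth
    have h1 : φμ = (fun z => ((φ z : ℝ):ℂ)) ∘ (μ • (ContinuousLinearMap.id ℝ E2)) := rfl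
    rw [h1, ContinuousLinearMap.iteratedFDeriv_comp_right _ hφc z (by exact_mod_cast le_top)]
    calc ‖(iteratedFDeriv ℝ i (fun z => ((φ z:ℝ):ℂ))
            ((μ • ContinuousLinearMap.id ℝ E2) z)).compContinuousLinearMap
          fun _ => μ • ContinuousLinearMap.id ℝ E2‖
        ≤ ‖iteratedFDeriv ℝ i (fun z => ((φ z:ℝ):ℂ)) (μ • z)‖ *
            ∏ _i : Fin i, ‖μ • ContinuousLinearMap.id ℝ E2‖ :=
          ContinuousMultilinearMap.norm_compContinuousLinearMap_le _ _
      _ ≤ Bφ' i * μ ^ i := by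
          rw [Finset.prod_const, Finset.card_univ, Fintype.card_fin]
          have h2 : ‖iteratedFDeriv ℝ i (fun z => ((φ z:ℝ):ℂ)) (μ • z)‖
              = ‖iteratedFDeriv ℝ i φ (μ • z)‖ :=
            Complex.ofRealLI.norm_iteratedFDeriv_comp_left hφsmooth.contDiffAt (by exact_mod_cast le_top)
          have h3 : ‖μ • ContinuousLinearMap.id ℝ E2‖ ≤ μ := by
            apply ContinuousLinearMap.opNorm_le_bound _ hμ0.le
            intro w; simp [norm_smul, abs_of_pos hμ0]
          rw [h2]
          exact mul_le_mul (hBφ' i _) (pow_le_pow_left₀ (norm_nonneg _) h3 i)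
            (by positivity) (hBφ'0 i)
  have hφμ0 : ∀ z : E2, ‖iteratedFDeriv ℝ 0 φμ z‖ ≤ Bφ' 1 * μ * ‖z‖ := by
    intro z
    rw [norm_iteratedFDeriv_zero]
    have : ‖φμ z‖ = ‖φ (μ • z)‖ := by simp [hφμdef, Complex.norm_real]
    rw [this]
    calc ‖φ (μ • z)‖ ≤ Bφ' 1 * ‖μ • z‖ := hφlin _
      _ = Bφ' 1 * μ * ‖z‖ := by rw [norm_smul, Real.norm_eq_abs, abs_of_pos hμ0]; ring
  -- the product functions
  have hpdVc : ∀ j, ContDiff ℝ ((⊤:ℕ∞):WithTop ℕ∞) (pd j Vc) := fun j => pd_contDiff j Vc hVc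
  set gf : Fin 2 → E2 → ℂ := fun j => fun y' => φμ y' * pd j Vc y' with hgfdef
  have hgfsmooth : ∀ j, ContDiff ℝ ((⊤:ℕ∞):WithTop ℕ∞) (gf j) :=
    fun j => hφμsmooth.mul (hpdVc j)
  -- key Leibniz estimate
  have hgf : ∀ (m : ℕ), 1 ≤ m → ∀ j (y : E2),
      ‖iteratedFDeriv ℝ m (gf j) y‖ ≤ cg m * μ * (1+‖y‖) ^ (-(1:ℝ)-κ) := by
    intro m hm j y
    have h1y : (0:ℝ) < 1 + ‖y‖ := by positivity
    have hleib := norm_iteratedFDeriv_mul_le (𝕜 := ℝ) (n := m) (hφμsmooth) (hpdVc j) y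
      (by exact_mod_cast le_top)
    refine hleib.trans ?_
    have hRHS : cg m * μ * (1+‖y‖) ^ (-(1:ℝ)-κ) = ∑ i ∈ Finset.range (m+1),
        (m.choose i : ℝ) * D i * CV' (m - i + 1) * μ * (1+‖y‖) ^ (-(1:ℝ)-κ) := by
      rw [hcgdef]
      rw [Finset.sum_mul, Finset.sum_mul]
    rw [hRHS]
    apply Finset.sum_le_sum
    intro i hi
    have him : i ≤ m := Nat.lt_succ_iff.mp (Finset.mem_range.mp hi)
    -- bound on the pd factor
    have hpdb : ‖iteratedFDeriv ℝ (m - i) (pd j Vc) y‖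
        ≤ CV' (m - i + 1) * (1 + ‖y‖) ^ (-(((m - i + 1 : ℕ)):ℝ) - κ) := by
      calc ‖iteratedFDeriv ℝ (m - i) (pd j Vc) y‖
          ≤ ‖iteratedFDeriv ℝ (m - i + 1) Vc y‖ := pd_norm_le j Vc hVc _ y
        _ = ‖iteratedFDeriv ℝ (m - i + 1) V y‖ := hVcnorm _ y
        _ ≤ CV' (m - i + 1) * (1 + ‖y‖) ^ (-(((m - i + 1 : ℕ)):ℝ) - κ) := hCV' _ y
    rcases Nat.eq_zero_or_pos i with hi0 | hi1
    · -- i = 0 : use |φ(μy)| ≤ B μ ‖y‖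
      subst hi0
      have hD : D 0 = Bφ' 1 := by simp [hDdef]
      calc (m.choose 0 : ℝ) * ‖iteratedFDeriv ℝ 0 φμ y‖ * ‖iteratedFDeriv ℝ (m - 0) (pd j Vc) y‖
          ≤ (m.choose 0 : ℝ) * (Bφ' 1 * μ * ‖y‖) *
            (CV' (m - 0 + 1) * (1 + ‖y‖) ^ (-(((m - 0 + 1 : ℕ)):ℝ) - κ)) := by
            apply mul_le_mul (mul_le_mul_of_nonneg_left (hφμ0 y) (by positivity)) hpdb
              (norm_nonneg _) (by positivity)
        _ = ((m.choose 0 : ℝ) * Bφ' 1 * CV' (m + 1) * μ) *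
            (‖y‖ * (1 + ‖y‖) ^ (-(((m + 1 : ℕ)):ℝ) - κ)) := by
            simp only [Nat.sub_zero]; ring
        _ ≤ ((m.choose 0 : ℝ) * Bφ' 1 * CV' (m + 1) * μ) * (1 + ‖y‖) ^ (-(1:ℝ)-κ) := by
            apply mul_le_mul_of_nonneg_left _ (by positivity)
            calc ‖y‖ * (1+‖y‖) ^ (-((m+1:ℕ):ℝ) - κ)
                ≤ (1+‖y‖) ^ (1:ℝ) * (1+‖y‖) ^ (-((m+1:ℕ):ℝ) - κ) := by
                  apply mul_le_mul_of_nonneg_right _ (Real.rpow_nonneg h1y.le _)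
                  rw [Real.rpow_one]; linarith [norm_nonneg y]
              _ = (1+‖y‖) ^ (1 + (-((m+1:ℕ):ℝ) - κ)) := by rw [← Real.rpow_add h1y]
              _ ≤ (1+‖y‖) ^ (-(1:ℝ) - κ) := by
                  apply Real.rpow_le_rpow_of_exponent_le (by linarith [norm_nonneg y])
                  push_cast
                  have : (1:ℝ) ≤ (m:ℝ) := by exact_mod_cast hm
                  linarith
        _ = (m.choose 0 : ℝ) * D 0 * CV' (m - 0 + 1) * μ * (1+‖y‖) ^ (-(1:ℝ)-κ) := by
            rw [hD]; simp only [Nat.sub_zero]; try ring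
    · -- i ≥ 1 : use μ^i ≤ μ
      have hφμb : ‖iteratedFDeriv ℝ i φμ y‖ ≤ Bφ' i * μ := by
        refine (hφμi i y).trans ?_
        apply mul_le_mul_of_nonneg_left _ (hBφ'0 i)
        calc μ ^ i ≤ μ ^ 1 := pow_le_pow_of_le_one hμ0.le hμ1 hi1
          _ = μ := pow_one μ
      have hD : D i = Bφ' i := by simp [hDdef, Nat.pos_iff_ne_zero.mp hi1]
      calc (m.choose i : ℝ) * ‖iteratedFDeriv ℝ i φμ y‖ * ‖iteratedFDeriv ℝ (m - i) (pd j Vc) y‖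
          ≤ (m.choose i : ℝ) * (Bφ' i * μ) *
            (CV' (m - i + 1) * (1 + ‖y‖) ^ (-(((m - i + 1 : ℕ)):ℝ) - κ)) := by
            apply mul_le_mul (mul_le_mul_of_nonneg_left hφμb (by positivity)) hpdb
              (norm_nonneg _) (by positivity)
        _ ≤ (m.choose i : ℝ) * (Bφ' i * μ) * (CV' (m - i + 1) * (1 + ‖y‖) ^ (-(1:ℝ) - κ)) := by
            apply mul_le_mul_of_nonneg_left _ (by positivity)
            apply mul_le_mul_of_nonneg_left _ (hCV'0 _)
            apply Real.rpow_le_rpow_of_exponent_le (by linarith [norm_nonneg y])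
            have : (1:ℝ) ≤ ((m - i + 1 : ℕ):ℝ) := by exact_mod_cast Nat.succ_le_succ (Nat.zero_le _)
            linarith
        _ = (m.choose i : ℝ) * D i * CV' (m - i + 1) * μ * (1+‖y‖) ^ (-(1:ℝ)-κ) := by
            rw [hD]; ring
  -- assemble W
  have hW : Twop φ ω μ (fun y => (V y : ℂ))
      = fun y => ((ω:ℂ)^2) • (pd 0 (gf 0) y + pd 1 (gf 1) y) := by
    funext z
    simp only [Twop, Fin.sum_univ_two, smul_eq_mul]
    try rfl
  rw [hW]
  have hsum : ContDiff ℝ ((⊤:ℕ∞):WithTop ℕ∞) (fun y => pd 0 (gf 0) y + pd 1 (gf 1) y) :=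
    (pd_contDiff 0 (gf 0) (hgfsmooth 0)).add (pd_contDiff 1 (gf 1) (hgfsmooth 1))
  rw [iteratedFDeriv_const_smul_apply' (hsum.of_le (by exact_mod_cast le_top)).contDiffAt, norm_smul]
  have hnormω : ‖(ω:ℂ)^2‖ ≤ ω₀^2 := by
    rw [norm_pow, Complex.norm_real, Real.norm_eq_abs]
    exact pow_le_pow_left₀ (abs_nonneg ω) hω 2
  calc ‖(ω:ℂ)^2‖ * ‖iteratedFDeriv ℝ k (fun y => pd 0 (gf 0) y + pd 1 (gf 1) y) y‖
      ≤ ω₀^2 * (cg (k+1) * μ * (1+‖y‖) ^ (-(1:ℝ)-κ) + cg (k+1) * μ * (1+‖y‖) ^ (-(1:ℝ)-κ)) := by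
        apply mul_le_mul hnormω _ (norm_nonneg _) (by positivity)
        rw [iteratedFDeriv_add_apply' ((pd_contDiff 0 (gf 0) (hgfsmooth 0)).of_le (by exact_mod_cast le_top)).contDiffAt
          ((pd_contDiff 1 (gf 1) (hgfsmooth 1)).of_le (by exact_mod_cast le_top)).contDiffAt]
        refine (norm_add_le _ _).trans ?_
        apply add_le_add
        · exact (pd_norm_le 0 (gf 0) (hgfsmooth 0) k y).trans
            (hgf (k+1) (Nat.succ_le_succ (Nat.zero_le _)) 0 y)
        · exact (pd_norm_le 1 (gf 1) (hgfsmooth 1) k y).trans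
            (hgf (k+1) (Nat.succ_le_succ (Nat.zero_le _)) 1 y)
    _ = 2 * ω₀^2 * cg (k+1) * μ * (1+‖y‖) ^ (-(1:ℝ)-κ) := by ring

lemma W_smooth (V : E2 → ℝ) (hVsmooth : ContDiff ℝ (⊤ : ℕ∞) V)
    (φ : E2 → ℝ) (hφsmooth : ContDiff ℝ (⊤ : ℕ∞) φ) (ω μ : ℝ) :
    ContDiff ℝ ((⊤:ℕ∞):WithTop ℕ∞) (Twop φ ω μ (fun y => (V y : ℂ))) := by
  have hVc : ContDiff ℝ ((⊤:ℕ∞):WithTop ℕ∞) (fun y : E2 => ((V y : ℝ) : ℂ)) :=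
    Complex.ofRealCLM.contDiff.comp (hVsmooth.of_le (by simp))
  have hφμ : ContDiff ℝ ((⊤:ℕ∞):WithTop ℕ∞) (fun y : E2 => ((φ (μ • y) : ℝ) : ℂ)) := by
    have h1 : (fun y : E2 => ((φ (μ • y) : ℝ) : ℂ))
        = (fun z => ((φ z : ℝ):ℂ)) ∘ (μ • (ContinuousLinearMap.id ℝ E2)) := rfl
    rw [h1]
    exact (Complex.ofRealCLM.contDiff.comp (hφsmooth.of_le (by simp))).comp
      (μ • (ContinuousLinearMap.id ℝ E2)).contDiff
  apply ContDiff.mul contDiff_const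
  apply ContDiff.sum
  intro j _
  exact pd_contDiff j _ (hφμ.mul (pd_contDiff j _ hVc))

end Stmt15Aux

set_option synthInstance.maxHeartbeats 1000000 in
theorem stmt15 (V : EuclideanSpace ℝ (Fin 2) → ℝ) (κ : ℝ) (hκ : 1 < κ)
    (hVsmooth : ContDiff ℝ (⊤ : ℕ∞) V)
    (hVdecay : ∀ n : ℕ, ∃ C : ℝ, ∀ y,
      ‖iteratedFDeriv ℝ n V y‖ ≤ C * (1 + ‖y‖) ^ (-(n:ℝ) - κ))
    (φ : EuclideanSpace ℝ (Fin 2) → ℝ) (hφsmooth : ContDiff ℝ (⊤ : ℕ∞) φ)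
    (hφ0 : φ 0 = 0)
    (hφbd : ∀ n : ℕ, ∃ C : ℝ, ∀ z, ‖iteratedFDeriv ℝ n φ z‖ ≤ C)
    (ω ω₀ : ℝ) (hω : |ω| ≤ ω₀) :
    ∀ s : ℝ, ∃ C : ℝ, ∀ μ : ℝ, 0 < μ → μ ≤ 1 →
      sobNorm s (Twop φ ω μ (fun y => (V y : ℂ))) ≤ ENNReal.ofReal (C * μ) := by
  classical
  intro s
  obtain ⟨c, hc⟩ := Classical.axiomOfChoice
    (Stmt15Aux.W_bound V κ hκ hVsmooth hVdecay φ hφsmooth hφ0 hφbd ω ω₀ hω)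
  set n : ℕ := ⌈max s 0⌉₊ with hndef
  set N : ℕ := n + 2 with hNdef
  -- the decaying weight on the space side
  have hJint : Integrable (fun y : EuclideanSpace ℝ (Fin 2) => (1+‖y‖) ^ (-(1:ℝ)-κ)) := by
    have h : (-(1:ℝ)-κ) = -(1+κ) := by ring
    rw [h]
    apply integrable_one_add_norm
    simp only [finrank_euclideanSpace, Fintype.card_fin]
    norm_num
    linarith
  set J : ℝ := ∫ y : EuclideanSpace ℝ (Fin 2), (1+‖y‖) ^ (-(1:ℝ)-κ) with hJdef
  have hJ0 : 0 ≤ J := integral_nonneg (fun y => Real.rpow_nonneg (by positivity) _)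
  -- the decaying weight on the Fourier side
  set g : EuclideanSpace ℝ (Fin 2) → ℝ := fun p => (1+‖p‖) ^ (-(2:ℝ)) with hgdef
  have hg0 : ∀ p, 0 ≤ g p := fun p => Real.rpow_nonneg (by positivity) _
  have hgmem : MemLp g 2 volume := by
    rw [memLp_two_iff_integrable_sq]
    · have h : (fun p : EuclideanSpace ℝ (Fin 2) => ((1+‖p‖) ^ (-(2:ℝ)))^2)
          = fun p : EuclideanSpace ℝ (Fin 2) => ((1+‖p‖) ^ (-(4:ℝ))) := by
        funext p
        rw [← Real.rpow_natCast ((1+‖p‖) ^ (-(2:ℝ))) 2, ← Real.rpow_mul (by positivity)]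
        norm_num
      rw [hgdef, h]
      apply integrable_one_add_norm
      simp only [finrank_euclideanSpace, Fintype.card_fin]
      norm_num
    · exact (((continuous_const.add continuous_norm).rpow_const
        (fun p => Or.inl (by positivity : (0:ℝ) < 1 + ‖p‖).ne')).aestronglyMeasurable)
  have hgfin : eLpNorm g 2 volume ≠ ⊤ := hgmem.2.ne
  set A : ℝ := ∑ k ∈ Finset.range (N+1), (N.choose k : ℝ) * (c k * J) with hAdef
  have hA0 : 0 ≤ A := by
    apply Finset.sum_nonneg
    intro k _
    exact mul_nonneg (by positivity) (mul_nonneg (hc k).1 hJ0)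
  refine ⟨A * (eLpNorm g 2 volume).toReal, ?_⟩
  intro μ hμ0 hμ1
  set W : EuclideanSpace ℝ (Fin 2) → ℂ := Twop φ ω μ (fun y => (V y : ℂ)) with hWdef
  have hWsmooth : ContDiff ℝ ((⊤:ℕ∞):WithTop ℕ∞) W :=
    Stmt15Aux.W_smooth V hVsmooth φ hφsmooth ω μ
  have hWb : ∀ k : ℕ, ∀ y, ‖iteratedFDeriv ℝ k W y‖ ≤ c k * μ * (1+‖y‖) ^ (-(1:ℝ)-κ) :=
    fun k y => (hc k).2 μ hμ0 hμ1 y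
  -- integrability of derivatives
  have hint : ∀ k : ℕ, Integrable (iteratedFDeriv ℝ k W) := by
    intro k
    apply Integrable.mono' (hJint.const_mul (c k * μ))
    · exact (hWsmooth.continuous_iteratedFDeriv (by exact_mod_cast le_top)).aestronglyMeasurable
    · filter_upwards with y
      simpa [mul_assoc] using hWb k y
  -- L¹ bounds of derivatives
  have hintle : ∀ k : ℕ, (∫ y, ‖iteratedFDeriv ℝ k W y‖) ≤ c k * μ * J := by
    intro k
    calc (∫ y, ‖iteratedFDeriv ℝ k W y‖)
        ≤ ∫ y : EuclideanSpace ℝ (Fin 2), c k * μ * (1+‖y‖) ^ (-(1:ℝ)-κ) := by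
          apply integral_mono (hint k).norm _ (fun y => hWb k y)
          simpa [mul_assoc] using hJint.const_mul (c k * μ)
      _ = c k * μ * J := by rw [integral_const_mul]
  -- Fourier decay
  have h2pi : (1:ℝ) ≤ 2 * Real.pi := by linarith [Real.pi_gt_three]
  have hF : ∀ k : ℕ, ∀ p, ‖p‖^k * ‖𝓕 W p‖ ≤ c k * μ * J := by
    have hkey : ∀ k : ℕ, ∀ p, (2*Real.pi)^k * ((‖p‖^2)^k * ‖𝓕 W p‖)
        ≤ ‖p‖^k * (c k * μ * J) := by
      intro k p
      have hid := Real.fourier_iteratedFDeriv (N := (⊤:ℕ∞)) hWsmooth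
        (fun m _ => hint m) (le_top : (k:ℕ∞) ≤ ⊤)
      have h1 := congrFun hid p
      have h2 : ‖(𝓕 (iteratedFDeriv ℝ k W) p) (fun _ => p)‖ ≤ (c k * μ * J) * ‖p‖^k := by
        calc ‖(𝓕 (iteratedFDeriv ℝ k W) p) (fun _ => p)‖
            ≤ ‖𝓕 (iteratedFDeriv ℝ k W) p‖ * ∏ _i : Fin k, ‖p‖ :=
              ContinuousMultilinearMap.le_opNorm _ _
          _ ≤ (c k * μ * J) * ‖p‖^k := by
              rw [Finset.prod_const, Finset.card_univ, Fintype.card_fin]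
              apply mul_le_mul_of_nonneg_right _ (by positivity)
              exact (VectorFourier.norm_fourierIntegral_le_integral_norm _ _ _ _ _).trans
                (hintle k)
      rw [h1] at h2
      have h3 : (VectorFourier.fourierPowSMulRight (-innerSL ℝ) (𝓕 W) p k) (fun _ => p)
          = (-(2 * Real.pi * Complex.I))^k • (∏ _i : Fin k, (-((innerSL ℝ) p p))) • 𝓕 W p := by
        simp
        left
        rw [innerSL_apply_apply, real_inner_self_eq_norm_sq]
        push_cast
        ring
      rw [h3] at h2
      have h4 : ‖(-(2 * Real.pi * Complex.I))^k • (∏ _i : Fin k, (-((innerSL ℝ) p p))) • 𝓕 W p‖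
          = (2*Real.pi)^k * ((‖p‖^2)^k * ‖𝓕 W p‖) := by
        rw [norm_smul, norm_smul, Finset.prod_const, Finset.card_univ, Fintype.card_fin,
          innerSL_apply_apply, real_inner_self_eq_norm_sq]
        rw [norm_pow, norm_neg, norm_pow, Real.norm_eq_abs, abs_neg, abs_pow, abs_norm]
        have h5 : ‖2 * Real.pi * Complex.I‖ = 2 * Real.pi := by
          simp [abs_of_nonneg Real.pi_nonneg]
        rw [h5]
        try ring
      rw [h4] at h2
      linarith [h2]
    intro k p
    have hI0 : 0 ≤ c k * μ * J :=
      mul_nonneg (mul_nonneg (hc k).1 hμ0.le) hJ0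
    rcases Nat.eq_zero_or_pos k with hk0 | hk1
    · subst hk0
      simpa using hkey 0 p
    · rcases eq_or_ne p 0 with hp | hp
      · subst hp
        rw [norm_zero, zero_pow (Nat.pos_iff_ne_zero.mp hk1), zero_mul]
        exact hI0
      · have hpn : (0:ℝ) < ‖p‖ := norm_pos_iff.mpr hp
        have step : ‖p‖^k * (‖p‖^k * ‖𝓕 W p‖) ≤ ‖p‖^k * (c k * μ * J) := by
          calc ‖p‖^k * (‖p‖^k * ‖𝓕 W p‖) = (‖p‖^2)^k * ‖𝓕 W p‖ := by
                rw [sq, mul_pow]; ring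
            _ ≤ (2*Real.pi)^k * ((‖p‖^2)^k * ‖𝓕 W p‖) := by
                apply le_mul_of_one_le_left (by positivity) (one_le_pow₀ h2pi)
            _ ≤ ‖p‖^k * (c k * μ * J) := hkey k p
        exact le_of_mul_le_mul_left step (pow_pos hpn k)
  -- binomial bound
  have hpoly : ∀ p, (1+‖p‖)^N * ‖𝓕 W p‖ ≤ A * μ := by
    intro p
    have hbin : (1+‖p‖)^N = ∑ k ∈ Finset.range (N+1), ‖p‖^k * 1^(N-k) * (N.choose k : ℝ) := by
      rw [add_comm (1:ℝ) ‖p‖]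
      exact_mod_cast add_pow ‖p‖ 1 N
    rw [hbin, Finset.sum_mul]
    have hstep : ∀ k ∈ Finset.range (N+1),
        ‖p‖^k * 1^(N-k) * (N.choose k : ℝ) * ‖𝓕 W p‖
          ≤ (N.choose k : ℝ) * (c k * J) * μ := by
      intro k _
      have h1 : ‖p‖^k * 1^(N-k) * (N.choose k : ℝ) * ‖𝓕 W p‖
          = (N.choose k : ℝ) * (‖p‖^k * ‖𝓕 W p‖) := by rw [one_pow]; ring
      rw [h1]
      calc (N.choose k : ℝ) * (‖p‖^k * ‖𝓕 W p‖)
          ≤ (N.choose k : ℝ) * (c k * μ * J) :=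
            mul_le_mul_of_nonneg_left (hF k p) (by positivity)
        _ = (N.choose k : ℝ) * (c k * J) * μ := by ring
    calc (∑ k ∈ Finset.range (N+1), ‖p‖^k * 1^(N-k) * (N.choose k : ℝ) * ‖𝓕 W p‖)
        ≤ ∑ k ∈ Finset.range (N+1), (N.choose k : ℝ) * (c k * J) * μ :=
          Finset.sum_le_sum hstep
      _ = A * μ := by rw [hAdef, Finset.sum_mul]
  -- weight bound
  have hweight : ∀ p : EuclideanSpace ℝ (Fin 2), ((1 + ‖p‖^2) ^ (s/2) : ℝ) ≤ (1+‖p‖)^n := by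
    intro p
    have hb1 : (1:ℝ) ≤ 1 + ‖p‖^2 := by nlinarith [sq_nonneg ‖p‖]
    have hb2 : (0:ℝ) < 1 + ‖p‖ := by positivity
    set t : ℝ := max s 0 with htdef
    calc ((1 + ‖p‖^2) ^ (s/2) : ℝ)
        ≤ (1 + ‖p‖^2) ^ (t/2) := by
          apply Real.rpow_le_rpow_of_exponent_le hb1
          have : s ≤ t := le_max_left _ _
          linarith
      _ ≤ ((1+‖p‖)^(2:ℕ)) ^ (t/2) := by
          apply Real.rpow_le_rpow (by positivity) _ (by positivity)
          nlinarith [norm_nonneg p]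
      _ = (1+‖p‖) ^ t := by
          rw [← Real.rpow_natCast (1+‖p‖) 2, ← Real.rpow_mul hb2.le]
          congr 1
          push_cast
          ring
      _ ≤ (1+‖p‖) ^ ((n:ℕ):ℝ) := by
          apply Real.rpow_le_rpow_of_exponent_le (by linarith [norm_nonneg p])
          exact Nat.le_ceil t
      _ = (1+‖p‖)^n := Real.rpow_natCast _ n
  -- final pointwise bound
  have hfinal : ∀ p, ‖((1 + ‖p‖^2) ^ (s/2) : ℝ) • (𝓕 W p)‖ ≤ (A * μ) * ‖g p‖ := by
    intro p
    have hb2 : (0:ℝ) < 1 + ‖p‖ := by positivity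
    have hw0 : (0:ℝ) ≤ ((1 + ‖p‖^2) ^ (s/2) : ℝ) := Real.rpow_nonneg (by positivity) _
    rw [norm_smul, Real.norm_eq_abs, abs_of_nonneg hw0]
    have h1 : ((1 + ‖p‖^2) ^ (s/2) : ℝ) * ‖𝓕 W p‖ ≤ (1+‖p‖)^n * ‖𝓕 W p‖ :=
      mul_le_mul_of_nonneg_right (hweight p) (norm_nonneg _)
    refine h1.trans ?_
    have hgp : g p = ((1+‖p‖)^(2:ℕ))⁻¹ := by
      rw [hgdef]
      rw [← Real.rpow_natCast (1+‖p‖) 2, ← Real.rpow_neg hb2.le]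
      norm_num
    have hNsplit : (1+‖p‖)^N = (1+‖p‖)^n * (1+‖p‖)^(2:ℕ) := by
      rw [hNdef, pow_add]
    rw [Real.norm_eq_abs, abs_of_nonneg (hg0 p), hgp, ← div_eq_mul_inv,
      le_div_iff₀ (by positivity : (0:ℝ) < (1+‖p‖)^(2:ℕ))]
    calc (1+‖p‖)^n * ‖𝓕 W p‖ * (1+‖p‖)^(2:ℕ)
        = (1+‖p‖)^N * ‖𝓕 W p‖ := by rw [hNsplit]; ring
      _ ≤ A * μ := hpoly p
  -- conclude
  rw [sobNorm]
  calc eLpNorm (fun p : EuclideanSpace ℝ (Fin 2) =>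
        ((1 + ‖p‖^2) ^ (s/2) : ℝ) • (𝓕 W p)) 2 volume
      ≤ eLpNorm (fun p => (A * μ) • g p) 2 volume := by
        apply eLpNorm_mono
        intro p
        have hr : ‖(A * μ) • g p‖ = (A * μ) * ‖g p‖ := by
          rw [norm_smul, Real.norm_eq_abs,
            abs_of_nonneg (mul_nonneg hA0 hμ0.le)]
        rw [hr]
        exact hfinal p
    _ = (‖A * μ‖₊ : ENNReal) * eLpNorm g 2 volume := by
        have hrfl : (fun p => (A * μ) • g p) = (A * μ) • g := rfl
        rw [hrfl, eLpNorm_const_smul, enorm_eq_nnnorm]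
    _ ≤ ENNReal.ofReal ((A * (eLpNorm g 2 volume).toReal) * μ) := by
        rw [← enorm_eq_nnnorm, ← ofReal_norm, Real.norm_eq_abs,
          abs_of_nonneg (by positivity : (0:ℝ) ≤ A * μ),
          ← ENNReal.ofReal_toReal hgfin, ← ENNReal.ofReal_mul (by positivity : (0:ℝ) ≤ A * μ)]
        apply ENNReal.ofReal_le_ofReal
        rw [ENNReal.toReal_ofReal ENNReal.toReal_nonneg]
        ring_nf
        exact le_refl _
end
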